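/- arXiv:1902.00600 — 5 statements merged into one kernel-verified Lean document; each statement's English description precedes it below -/
import Mathlib

section
/- For every real number z, exp(−z) − 1 + z ≥ z² / (2 + |z|). -/
/-!
After clearing the denominator, the case `z ≤ 0` follows from the quadratic Taylor bound
`1 + t + t²/2 ≤ exp t` at `t = -z`. For `z ≥ 0` the inequality is the Padé-type bound
`2 - z ≤ (2 + z) exp (-z)`: the function `(2 + z) exp (-z) + z` has derivative
`1 - (1 + z) exp (-z) ≥ 0`, hence is monotone, and equals `2` at `z = 0`.
-/

open Real

lemma one_add_mul_exp_neg_le_one (z : ℝ) : (1 + z) * exp (-z) ≤ 1 :=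
  calc (1 + z) * exp (-z) ≤ exp z * exp (-z) := by gcongr; linarith [add_one_le_exp z]
    _ = 1 := by rw [← exp_add, add_neg_cancel, exp_zero]

lemma monotone_two_add_mul_exp_neg_add : Monotone fun z : ℝ ↦ (2 + z) * exp (-z) + z := by
  have hderiv (z : ℝ) :
      HasDerivAt (fun z : ℝ ↦ (2 + z) * exp (-z) + z) (1 - (1 + z) * exp (-z)) z :=
    (((hasDerivAt_id' z).const_add 2).mul (hasDerivAt_neg' z).exp).add (hasDerivAt_id' z)
      |>.congr_deriv (by ring)
  refine monotone_of_deriv_nonneg (fun z ↦ (hderiv z).differentiableAt) fun z ↦ ?_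
  rw [(hderiv z).deriv]
  linarith [one_add_mul_exp_neg_le_one z]

lemma two_sub_le_two_add_mul_exp_neg {z : ℝ} (hz : 0 ≤ z) : 2 - z ≤ (2 + z) * exp (-z) := by
  have := monotone_two_add_mul_exp_neg_add hz
  simp only [add_zero, neg_zero, exp_zero, mul_one] at this
  linarith

lemma sq_div_two_add_le_exp_neg_sub_one_add {z : ℝ} (hz : 0 ≤ z) :
    z ^ 2 / (2 + z) ≤ exp (-z) - 1 + z := by
  rw [div_le_iff₀ (by positivity)]
  nlinarith [two_sub_le_two_add_mul_exp_neg hz]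

lemma sq_div_two_sub_le_exp_neg_sub_one_add {z : ℝ} (hz : z ≤ 0) :
    z ^ 2 / (2 - z) ≤ exp (-z) - 1 + z := by
  rw [div_le_iff₀ (by linarith)]
  have hquad : z ^ 2 / 2 ≤ exp (-z) - 1 + z := by
    linarith [quadratic_le_exp_of_nonneg (neg_nonneg.2 hz), neg_sq z]
  nlinarith [mul_le_mul_of_nonneg_right hquad (by linarith : 0 ≤ 2 - z),
    mul_nonpos_of_nonneg_of_nonpos (sq_nonneg z) hz]

/-- Lemma 4 (deterministic functional inequality): for every real `z`,
`exp(−z) − 1 + z ≥ z² / (2 + |z|)`. -/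
theorem exp_neg_sub_one_add_ge_sq_div (z : ℝ) :
    Real.exp (-z) - 1 + z ≥ z ^ 2 / (2 + |z|) := by
  rcases le_total 0 z with hz | hz
  · rw [abs_of_nonneg hz]
    exact sq_div_two_add_le_exp_neg_sub_one_add hz
  · rw [abs_of_nonpos hz, ← sub_eq_add_neg]
    exact sq_div_two_sub_le_exp_neg_sub_one_add hz
end

section
/- Let μ be the Gibbs distribution of a discrete graphical model with maximum interaction strength γ. Then for any two disjoint subsets A, B ⊆ V and any configuration σ̄, μ({σ : σ agrees with σ̄ on all coordinates in A ∪ B}) ≥ (Π_{i∈A} exp(−2γ)/|A_i|) · μ({σ : σ agrees with σ̄ on all coordinates in B}). Equivalently, the conditional probability of the coordinates in A given those in B is at least Π_{i∈A} exp(−2γ)/|A_i|. -/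
open Finset

/-- The locally centered basis function
`g_{ik}(σ) = f_k(σ) − (1/|A_i|) Σ_{a∈A_i} f_k(σ[i:=a])`. -/
noncomputable def locg {V : Type*} [DecidableEq V] (A : V → Type*) [∀ i, Fintype (A i)]
    {K : Type*} (f : K → (∀ i, A i) → ℝ) (i : V) (k : K) (σ : ∀ j, A j) : ℝ :=
  f k σ - (1 / (Fintype.card (A i) : ℝ)) * ∑ a : A i, f k (Function.update σ i a)

/-- The set of factors `K_i = {k ∈ K : i ∈ ∂k}` whose neighborhood contains `i`. -/
def Kat {V K : Type*} [Fintype K] [DecidableEq V] (nbr : K → Finset V) (i : V) : Finset K :=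
  Finset.univ.filter (fun k => i ∈ nbr k)


/-! Changing the spin at a single site `i` changes the energy `Σ_k θ_k f_k` only through the
factors in `K_i`, and by exactly the change of the local field `Σ_{k ∈ K_i} θ_k g_{ik}`, hence
by at most `2γ`. So every configuration in the cylinder `{σ = σ̄ on T}` has Gibbs weight at most
`e^{2γ}` times that of the configuration obtained by resetting `σ i` to `σ̄ i`; summing over the
`|A_i|` values of `σ i` gives the one-site bound, and induction over the sites of `SA` gives the
product. -/

open Function

section LocalField

variable {V : Type*} [DecidableEq V] {A : V → Type*} {K : Type*}

theorem apply_update_of_notMem_Kat [Fintype K] {nbr : K → Finset V}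
    {f : K → (∀ i, A i) → ℝ}
    (hloc : ∀ k (σ τ : ∀ i, A i), (∀ i ∈ nbr k, σ i = τ i) → f k σ = f k τ)
    {i : V} {k : K} (hk : k ∉ Kat nbr i) (σ : ∀ i, A i) (a : A i) :
    f k (update σ i a) = f k σ := by
  refine hloc k _ _ fun j hj => update_of_ne ?_ a σ
  rintro rfl
  exact hk (by simpa [Kat] using hj)

variable [∀ i, Fintype (A i)]

theorem locg_update_sub_locg (f : K → (∀ i, A i) → ℝ) (i : V) (k : K) (σ : ∀ i, A i)
    (a : A i) :
    locg A f i k (update σ i a) - locg A f i k σ = f k (update σ i a) - f k σ := by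
  simp only [locg, update_idem]
  ring

variable [Fintype K] {nbr : K → Finset V} {f : K → (∀ i, A i) → ℝ}

theorem energy_update_sub_eq
    (hloc : ∀ k (σ τ : ∀ i, A i), (∀ i ∈ nbr k, σ i = τ i) → f k σ = f k τ)
    (θ : K → ℝ) (i : V) (σ : ∀ i, A i) (a : A i) :
    ∑ k, θ k * f k (update σ i a) - ∑ k, θ k * f k σ =
      ∑ k ∈ Kat nbr i, θ k * locg A f i k (update σ i a) -
        ∑ k ∈ Kat nbr i, θ k * locg A f i k σ := by
  simp only [← sum_sub_distrib, ← mul_sub, locg_update_sub_locg]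
  refine (sum_subset (subset_univ _) fun k _ hk => ?_).symm
  rw [apply_update_of_notMem_Kat hloc hk, sub_self, mul_zero]

theorem energy_update_sub_le
    (hloc : ∀ k (σ τ : ∀ i, A i), (∀ i ∈ nbr k, σ i = τ i) → f k σ = f k τ)
    {θ : K → ℝ} {γ : ℝ}
    (hγ : ∀ (i : V) (σ : ∀ j, A j), |∑ k ∈ Kat nbr i, θ k * locg A f i k σ| ≤ γ)
    (i : V) (σ : ∀ i, A i) (a : A i) :
    ∑ k, θ k * f k (update σ i a) - ∑ k, θ k * f k σ ≤ 2 * γ := by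
  rw [energy_update_sub_eq hloc]
  linarith [(abs_le.mp (hγ i (update σ i a))).2, (abs_le.mp (hγ i σ)).1]

end LocalField

section Cylinder

variable {V : Type*} [Fintype V] [DecidableEq V] {A : V → Type*} [∀ i, Fintype (A i)]
  [∀ i, DecidableEq (A i)]

def cylinder (S : Finset V) (σbar : ∀ i, A i) : Finset (∀ i, A i) :=
  univ.filter fun σ => ∀ i ∈ S, σ i = σbar i

theorem mem_cylinder {S : Finset V} {σbar σ : ∀ i, A i} :
    σ ∈ cylinder S σbar ↔ ∀ i ∈ S, σ i = σbar i := by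
  simp [cylinder]

theorem sum_cylinder_eq_sum_cylinder_insert_sum_update {M : Type*} [AddCommMonoid M]
    (w : (∀ i, A i) → M) {i : V} {T : Finset V} (hi : i ∉ T) (σbar : ∀ i, A i) :
    ∑ σ ∈ cylinder T σbar, w σ =
      ∑ σ ∈ cylinder (insert i T) σbar, ∑ a : A i, w (update σ i a) := by
  have hne : ∀ j ∈ T, j ≠ i := fun j hj h => hi (h ▸ hj)
  rw [← sum_product' _ _ fun σ a => w (update σ i a)]
  refine sum_nbij' (fun τ => (update τ i (σbar i), τ i)) (fun p => update p.1 i p.2)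
    ?_ ?_ ?_ ?_ fun τ _ => by simp
  · intro τ hτ
    simp only [mem_product, mem_cylinder, mem_univ, and_true, mem_insert, forall_eq_or_imp,
      update_self, true_and] at hτ ⊢
    exact fun j hj => (update_of_ne (hne j hj) _ τ).trans (hτ j hj)
  · intro p hp
    simp only [mem_product, mem_cylinder, mem_insert, forall_eq_or_imp] at hp ⊢
    exact fun j hj => (update_of_ne (hne j hj) _ _).trans (hp.1.2 j hj)
  · intro τ _
    simp
  · rintro ⟨τ, a⟩ hp
    simp only [mem_product, mem_cylinder, mem_insert, forall_eq_or_imp] at hp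
    simp [← hp.1.1]

variable {w : (∀ i, A i) → ℝ} {c : ℝ}

theorem inv_div_card_mul_sum_cylinder_le [∀ i, Nonempty (A i)] (hc : 0 < c) {i : V}
    (hw : ∀ σ (a : A i), w (update σ i a) ≤ c * w σ) {T : Finset V} (hi : i ∉ T)
    (σbar : ∀ i, A i) :
    c⁻¹ / Fintype.card (A i) * ∑ σ ∈ cylinder T σbar, w σ ≤
      ∑ σ ∈ cylinder (insert i T) σbar, w σ := by
  have hcard : (0 : ℝ) < Fintype.card (A i) := by exact_mod_cast Fintype.card_pos
  have hsum : ∑ σ ∈ cylinder T σbar, w σ ≤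
      Fintype.card (A i) * c * ∑ σ ∈ cylinder (insert i T) σbar, w σ := by
    rw [sum_cylinder_eq_sum_cylinder_insert_sum_update w hi, mul_sum]
    refine sum_le_sum fun σ _ => ?_
    calc ∑ a : A i, w (update σ i a) ≤ ∑ _a : A i, c * w σ := sum_le_sum fun a _ => hw σ a
      _ = Fintype.card (A i) * c * w σ := by simp [mul_assoc]
  calc c⁻¹ / Fintype.card (A i) * ∑ σ ∈ cylinder T σbar, w σ
      ≤ c⁻¹ / Fintype.card (A i) *
          (Fintype.card (A i) * c * ∑ σ ∈ cylinder (insert i T) σbar, w σ) := by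
        gcongr
    _ = ∑ σ ∈ cylinder (insert i T) σbar, w σ := by
        field_simp

theorem prod_mul_sum_cylinder_le [∀ i, Nonempty (A i)] (hc : 0 < c) {S T : Finset V}
    (hw : ∀ i ∈ S, ∀ σ (a : A i), w (update σ i a) ≤ c * w σ) (hST : Disjoint S T)
    (σbar : ∀ i, A i) :
    (∏ i ∈ S, c⁻¹ / Fintype.card (A i)) * ∑ σ ∈ cylinder T σbar, w σ ≤
      ∑ σ ∈ cylinder (S ∪ T) σbar, w σ := by
  induction S using Finset.induction_on with
  | empty => simp
  | insert i S hiS ih =>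
    rw [disjoint_insert_left] at hST
    have hi : i ∉ S ∪ T := by simp [hiS, hST.1]
    rw [prod_insert hiS, mul_assoc, insert_union]
    calc c⁻¹ / Fintype.card (A i) * ((∏ j ∈ S, c⁻¹ / Fintype.card (A j)) *
          ∑ σ ∈ cylinder T σbar, w σ)
        ≤ c⁻¹ / Fintype.card (A i) * ∑ σ ∈ cylinder (S ∪ T) σbar, w σ := by
          gcongr
          exact ih (fun j hj => hw j (mem_insert_of_mem hj)) hST.2
      _ ≤ _ := inv_div_card_mul_sum_cylinder_le hc (hw i (mem_insert_self i S)) hi σbar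

end Cylinder

/-- Lemma 1 (lower-bounded conditional probabilities): for a Gibbs distribution with
maximum interaction strength `γ` and any disjoint `A, B ⊆ V`,
`μ(σ agrees with σ̄ on A ∪ B) ≥ (Π_{i∈A} exp(−2γ)/|A_i|) · μ(σ agrees with σ̄ on B)`. -/
theorem conditional_probability_lower_bound
    {V : Type*} [Fintype V] [DecidableEq V]
    (A : V → Type*) [∀ i, Fintype (A i)] [∀ i, Nonempty (A i)] [∀ i, DecidableEq (A i)]
    {K : Type*} [Fintype K]
    (nbr : K → Finset V) (f : K → (∀ i, A i) → ℝ)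
    (hloc : ∀ k (σ τ : ∀ i, A i), (∀ i ∈ nbr k, σ i = τ i) → f k σ = f k τ)
    (θ : K → ℝ) (γ : ℝ)
    (hγ : ∀ (i : V) (σ : ∀ j, A j), |∑ k ∈ Kat nbr i, θ k * locg A f i k σ| ≤ γ)
    (μ : (∀ i, A i) → ℝ)
    (hμ : ∀ σ, μ σ =
      Real.exp (∑ k, θ k * f k σ) / ∑ τ : ∀ i, A i, Real.exp (∑ k, θ k * f k τ))
    (SA SB : Finset V) (hdis : Disjoint SA SB) (σbar : ∀ i, A i) :
    ∑ σ ∈ univ.filter (fun σ : ∀ i, A i => ∀ i ∈ SA ∪ SB, σ i = σbar i), μ σ ≥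
      (∏ i ∈ SA, Real.exp (-(2 * γ)) / (Fintype.card (A i) : ℝ)) *
        ∑ σ ∈ univ.filter (fun σ : ∀ i, A i => ∀ i ∈ SB, σ i = σbar i), μ σ := by
  have hZ : 0 < ∑ τ : ∀ i, A i, Real.exp (∑ k, θ k * f k τ) :=
    sum_pos (fun τ _ => Real.exp_pos _) univ_nonempty
  have hμ_cylinder : ∀ S : Finset V, ∑ σ ∈ cylinder S σbar, μ σ =
      (∑ σ ∈ cylinder S σbar, Real.exp (∑ k, θ k * f k σ)) /
        ∑ τ : ∀ i, A i, Real.exp (∑ k, θ k * f k τ) := fun S => by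
    rw [sum_div]
    exact sum_congr rfl fun σ _ => hμ σ
  have hw : ∀ i ∈ SA, ∀ σ (a : A i), Real.exp (∑ k, θ k * f k (update σ i a)) ≤
      Real.exp (2 * γ) * Real.exp (∑ k, θ k * f k σ) := fun i _ σ a => by
    rw [← Real.exp_add, Real.exp_le_exp]
    linarith [energy_update_sub_le hloc hγ i σ a]
  change ∑ σ ∈ cylinder (SA ∪ SB) σbar, μ σ ≥ _ * ∑ σ ∈ cylinder SB σbar, μ σ
  rw [ge_iff_le, hμ_cylinder, hμ_cylinder, ← mul_div_assoc, Real.exp_neg]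
  gcongr
  exact prod_mul_sum_cylinder_le (Real.exp_pos _) hw hdis σbar
end

section
/- For every vertex u ∈ V and every factor k ∈ K_u, the expectation under the Gibbs distribution μ of the random variable g_{uk}(σ) · exp(−Σ_{l∈K_u} θ*_l g_{ul}(σ)) is zero; that is, Σ_σ μ(σ) g_{uk}(σ) exp(−Σ_{l∈K_u} θ*_l g_{ul}(σ)) = 0. -/
open Finset

/-!
`g_{uk}` sums to zero along every fibre `{σ[u:=a] : a ∈ A_u}`, while the energy
`Σ_l θ_l f_l − Σ_{l ∈ K_u} θ_l g_{ul}` is constant along it: for `l ∈ K_u` the difference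
`f_l − g_{ul}` is the average of `f_l` over the fibre, and for `l ∉ K_u` the function `f_l` does
not see the coordinate `u`. Hence `μ · g_{uk} · exp(−Σ_{l ∈ K_u} θ_l g_{ul})` is `g_{uk}` times
a function constant on fibres, and summing fibre by fibre gives zero.
-/

open Function

section Fibres

variable {V : Type*} [DecidableEq V] {A : V → Type*}

theorem piSplitAt_symm_eq_update (u : V) (a b : A u) (ρ : ∀ j : {j // j ≠ u}, A j) :
    (Equiv.piSplitAt u A).symm (a, ρ) = update ((Equiv.piSplitAt u A).symm (b, ρ)) u a := by
  funext j
  rcases eq_or_ne j u with rfl | hj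
  · simp
  · simp [hj]

variable [Fintype V] [∀ i, Fintype (A i)]

theorem sum_eq_zero_of_sum_update_eq_zero {M : Type*} [AddCommMonoid M] (u : V)
    [Nonempty (A u)] (Φ : (∀ i, A i) → M) (hΦ : ∀ σ, ∑ a, Φ (update σ u a) = 0) :
    ∑ σ, Φ σ = 0 := by
  obtain ⟨b⟩ := ‹Nonempty (A u)›
  rw [← (Equiv.piSplitAt u A).symm.sum_comp, Fintype.sum_prod_type, Finset.sum_comm]
  refine Finset.sum_eq_zero fun ρ _ => ?_
  simpa only [← piSplitAt_symm_eq_update u _ b ρ] using hΦ ((Equiv.piSplitAt u A).symm (b, ρ))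

theorem sum_mul_eq_zero_of_sum_update_eq_zero {R : Type*} [NonUnitalNonAssocSemiring R]
    (u : V) [Nonempty (A u)] (h G : (∀ i, A i) → R) (hh : ∀ σ, ∑ a, h (update σ u a) = 0)
    (hG : ∀ σ a, G (update σ u a) = G σ) :
    ∑ σ, h σ * G σ = 0 :=
  sum_eq_zero_of_sum_update_eq_zero u _ fun σ => by
    simp only [hG, ← Finset.sum_mul, hh, zero_mul]

end Fibres

section LocallyCentered

variable {V : Type*} [DecidableEq V] {A : V → Type*} [∀ i, Fintype (A i)] {K : Type*}
  (f : K → (∀ i, A i) → ℝ)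

theorem sum_locg_update_eq_zero (i : V) [Nonempty (A i)] (k : K) (σ : ∀ j, A j) :
    ∑ a, locg A f i k (update σ i a) = 0 := by
  have hcard : (Fintype.card (A i) : ℝ) ≠ 0 := Nat.cast_ne_zero.mpr Fintype.card_ne_zero
  simp only [locg, update_idem, Finset.sum_sub_distrib, Finset.sum_const, Finset.card_univ,
    nsmul_eq_mul]
  field_simp
  ring

theorem sub_locg_update (i : V) (k : K) (σ : ∀ j, A j) (a : A i) :
    f k (update σ i a) - locg A f i k (update σ i a) = f k σ - locg A f i k σ := by
  simp only [locg, update_idem, sub_sub_cancel]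

theorem energy_sub_sum_locg_update [Fintype K] {nbr : K → Finset V}
    (hloc : ∀ k (σ τ : ∀ i, A i), (∀ i ∈ nbr k, σ i = τ i) → f k σ = f k τ)
    (θ : K → ℝ) (u : V) (σ : ∀ j, A j) (a : A u) :
    (∑ l, θ l * f l (update σ u a)) - ∑ l ∈ Kat nbr u, θ l * locg A f u l (update σ u a) =
      (∑ l, θ l * f l σ) - ∑ l ∈ Kat nbr u, θ l * locg A f u l σ := by
  have hsplit : ∀ τ : ∀ j, A j,
      (∑ l, θ l * f l τ) - ∑ l ∈ Kat nbr u, θ l * locg A f u l τ =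
        (∑ l ∈ Kat nbr u, θ l * (f l τ - locg A f u l τ)) +
          ∑ l with u ∉ nbr l, θ l * f l τ := by
    intro τ
    rw [← Finset.sum_filter_add_sum_filter_not univ (u ∈ nbr ·)]
    simp only [Kat, mul_sub, Finset.sum_sub_distrib]
    ring
  have hfar : ∀ l ∈ ({l | u ∉ nbr l} : Finset K), f l (update σ u a) = f l σ := fun l hl =>
    hloc l _ _ fun i hi => update_of_ne (by rintro rfl; simp_all) _ _
  rw [hsplit, hsplit]
  simp only [sub_locg_update]
  exact congrArg _ (Finset.sum_congr rfl fun l hl => by rw [hfar l hl])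

end LocallyCentered

theorem screening_property_general
    {V : Type*} [Fintype V] [DecidableEq V]
    (A : V → Type*) [∀ i, Fintype (A i)] [∀ i, Nonempty (A i)]
    {K : Type*} [Fintype K]
    (nbr : K → Finset V) (f : K → (∀ i, A i) → ℝ)
    (hloc : ∀ k (σ τ : ∀ i, A i), (∀ i ∈ nbr k, σ i = τ i) → f k σ = f k τ)
    (θ : K → ℝ)
    (μ : (∀ i, A i) → ℝ)
    (hμ : ∀ σ, μ σ =
      Real.exp (∑ k, θ k * f k σ) / ∑ τ : ∀ i, A i, Real.exp (∑ k, θ k * f k τ))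
    (u : V) (k : K) :
    ∑ σ : ∀ i, A i, μ σ * (locg A f u k σ *
      Real.exp (-∑ l ∈ Kat nbr u, θ l * locg A f u l σ)) = 0 := by
  set Z := ∑ τ : ∀ i, A i, Real.exp (∑ k, θ k * f k τ)
  have hsummand : ∀ σ, μ σ * (locg A f u k σ *
      Real.exp (-∑ l ∈ Kat nbr u, θ l * locg A f u l σ)) =
        locg A f u k σ *
          (Real.exp ((∑ l, θ l * f l σ) - ∑ l ∈ Kat nbr u, θ l * locg A f u l σ) / Z) := by
    intro σ
    rw [hμ, sub_eq_add_neg, Real.exp_add]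
    ring
  simp only [hsummand]
  exact sum_mul_eq_zero_of_sum_update_eq_zero u _ _ (sum_locg_update_eq_zero f u k)
    fun σ a => by rw [energy_sub_sum_locg_update f hloc]

/-- Screening property (Lemma 3): for every `u ∈ V` and `k ∈ K_u`, the expectation under
the Gibbs distribution of `g_{uk}(σ) · exp(−Σ_{l∈K_u} θ*_l g_{ul}(σ))` is zero. -/
theorem screening_property
    {V : Type*} [Fintype V] [DecidableEq V]
    (A : V → Type*) [∀ i, Fintype (A i)] [∀ i, Nonempty (A i)]
    {K : Type*} [Fintype K]
    (nbr : K → Finset V) (f : K → (∀ i, A i) → ℝ)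
    (hloc : ∀ k (σ τ : ∀ i, A i), (∀ i ∈ nbr k, σ i = τ i) → f k σ = f k τ)
    (θ : K → ℝ)
    (μ : (∀ i, A i) → ℝ)
    (hμ : ∀ σ, μ σ =
      Real.exp (∑ k, θ k * f k σ) / ∑ τ : ∀ i, A i, Real.exp (∑ k, θ k * f k τ))
    (u : V) (k : K) (hk : u ∈ nbr k) :
    ∑ σ : ∀ i, A i, μ σ * (locg A f u k σ *
      Real.exp (-∑ l ∈ Kat nbr u, θ l * locg A f u l σ)) = 0 :=
  screening_property_general A nbr f hloc θ μ hμ u k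
end

section
/- Fix a node u ∈ V, assume max_σ |g_{uk}(σ)| ≤ 1 for all k ∈ K_u, and let γ be the maximum interaction strength. Let 𝐊_u = |K_u|, let X_u ⊆ ℝ^{K_u}, T_u ⊆ K_u, and let N be a seminorm on ℝ^{T_u} such that there is ρ_u > 0 with E_μ[(Σ_{k∈K_u} x_k g_{uk}(σ))²] ≥ ρ_u N(x_{T_u})² for all x ∈ X_u, where x_{T_u} is the restriction of x to the coordinates in T_u. Let ε₂ > 0, δ₂ ∈ (0,1), and n > (2/ε₂²) log(2𝐊_u²/δ₂). Draw σ^(1),…,σ^(n) i.i.d. from μ and define δS_n(Δ, θ*) = (1/n) Σ_{t=1}^n exp(−Σ_{k∈K_u} θ*_k g_{uk}(σ^(t))) · [exp(−Σ_{k∈K_u} Δ_k g_{uk}(σ^(t))) − 1 + Σ_{k∈K_u} Δ_k g_{uk}(σ^(t))]. Then with probability at least 1 − δ₂ under μ^⊗n, for all Δ ∈ X_u: δS_n(Δ, θ*) ≥ exp(−γ) · (ρ_u N(Δ_{T_u})² − ε₂ ‖Δ‖₁²) / (2 + ‖Δ‖₁). -/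
/-!
The summand of `δS_n` at a sample with `y = Σ_k Δ_k g_{uk}` is `e^{-Σ θ_k g_{uk}} (e^{-y} - 1 + y)`,
and `e^{-y} - 1 + y ≥ y² / (2 + |y|)` with `|y| ≤ ‖Δ‖₁` and `|Σ θ_k g_{uk}| ≤ γ`, so
`δS_n ≥ e^{-γ} / (2 + ‖Δ‖₁)` times the empirical quadratic form `(1/n) Σ_t y_t²`. If every
empirical second moment `(1/n) Σ_t g_{uk} g_{ul}` is within `ε₂` of its mean, this form is at
least the population form minus `ε₂ ‖Δ‖₁²`, and the population form is at least `ρ_u N(Δ_{T_u})²`.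
By Hoeffding's inequality and a union bound over the `𝐊_u²` pairs `(k, l)`, some second moment
deviates by more than `ε₂` with probability at most `2 𝐊_u² e^{-n ε₂² / 2} < δ₂`.
-/

open Finset

/-- Restriction of a vector `x : K → ℝ` to the coordinates in the finite set `T`. -/
def restr {K : Type*} (T : Finset K) (x : K → ℝ) : {k : K // k ∈ T} → ℝ :=
  fun j => x j.1

open MeasureTheory ProbabilityTheory

lemma two_sub_le_two_add_mul_exp_neg_s8 {y : ℝ} (hy : 0 ≤ y) :
    2 - y ≤ (2 + y) * Real.exp (-y) := by
  let F : ℝ → ℝ := fun y => (2 + y) * Real.exp (-y) + y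
  have hF (y : ℝ) : HasDerivAt F (1 - (1 + y) * Real.exp (-y)) y := by
    have h := (((hasDerivAt_id' y).const_add 2).mul (hasDerivAt_neg y).exp).add (hasDerivAt_id' y)
    exact h.congr_deriv (by ring)
  have hmono : Monotone F := by
    refine monotone_of_deriv_nonneg (fun y => (hF y).differentiableAt) fun y => ?_
    have h := mul_le_mul_of_nonneg_right (Real.add_one_le_exp y) (Real.exp_pos (-y)).le
    rw [← Real.exp_add, add_neg_cancel, Real.exp_zero, add_comm] at h
    rw [(hF y).deriv]
    linarith
  have := hmono hy
  simp only [F, add_zero, neg_zero, Real.exp_zero, mul_one] at this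
  linarith

lemma sq_div_two_add_abs_le_exp_neg_sub_one_add (y : ℝ) :
    y ^ 2 / (2 + |y|) ≤ Real.exp (-y) - 1 + y := by
  rcases le_total 0 y with hy | hy
  · rw [abs_of_nonneg hy, div_le_iff₀ (by positivity)]
    nlinarith [two_sub_le_two_add_mul_exp_neg_s8 hy, Real.exp_pos (-y)]
  · rw [abs_of_nonpos hy, div_le_iff₀ (by linarith)]
    nlinarith [Real.quadratic_le_exp_of_nonneg (neg_nonneg.2 hy)]

lemma exp_neg_mul_sq_div_le_exp_neg_mul {a y γ L : ℝ} (ha : |a| ≤ γ) (hy : |y| ≤ L) :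
    Real.exp (-γ) * (y ^ 2 / (2 + L)) ≤ Real.exp (-a) * (Real.exp (-y) - 1 + y) := by
  have hγ : Real.exp (-γ) ≤ Real.exp (-a) := Real.exp_le_exp.2 (by linarith [le_abs_self a])
  have hL : 0 ≤ L := (abs_nonneg y).trans hy
  have hdiv : y ^ 2 / (2 + L) ≤ y ^ 2 / (2 + |y|) :=
    div_le_div_of_nonneg_left (sq_nonneg y) (by positivity) (by linarith)
  exact mul_le_mul hγ (hdiv.trans (sq_div_two_add_abs_le_exp_neg_sub_one_add y)) (by positivity)
    (Real.exp_pos _).le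

section QuadraticForm

variable {K ι ι' : Type*} [Fintype ι] [Fintype ι'] (S : Finset K) (c : K → ℝ)

lemma abs_sum_mul_le_sum_abs {x : K → ℝ} (hx : ∀ k ∈ S, |x k| ≤ 1) :
    |∑ k ∈ S, c k * x k| ≤ ∑ k ∈ S, |c k| :=
  (abs_sum_le_sum_abs _ _).trans <| sum_le_sum fun k hk => by
    rw [abs_mul]
    exact mul_le_of_le_one_right (abs_nonneg _) (hx k hk)

lemma sum_mul_sq_sum_eq (g : K → ι → ℝ) (w : ι → ℝ) :
    ∑ i, w i * (∑ k ∈ S, c k * g k i) ^ 2 =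
      ∑ k ∈ S, ∑ l ∈ S, c k * c l * ∑ i, w i * (g k i * g l i) := by
  have h (i : ι) : w i * (∑ k ∈ S, c k * g k i) ^ 2 =
      ∑ k ∈ S, ∑ l ∈ S, c k * c l * (w i * (g k i * g l i)) := by
    rw [sq, sum_mul_sum, mul_sum]
    exact sum_congr rfl fun k _ => by rw [mul_sum]; exact sum_congr rfl fun l _ => by ring
  simp only [h, mul_sum]
  rw [sum_comm]
  exact sum_congr rfl fun k _ => sum_comm

lemma sub_le_sum_mul_sq_sum {g : K → ι → ℝ} {g' : K → ι' → ℝ} {w : ι → ℝ} {w' : ι' → ℝ}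
    {ε : ℝ} (h : ∀ k ∈ S, ∀ l ∈ S,
      |∑ i, w i * (g k i * g l i) - ∑ j, w' j * (g' k j * g' l j)| ≤ ε) :
    ∑ j, w' j * (∑ k ∈ S, c k * g' k j) ^ 2 - ε * (∑ k ∈ S, |c k|) ^ 2 ≤
      ∑ i, w i * (∑ k ∈ S, c k * g k i) ^ 2 := by
  rw [sum_mul_sq_sum_eq, sum_mul_sq_sum_eq, sq, sum_mul_sum, mul_sum, sub_le_iff_le_add',
    ← sum_add_distrib]
  refine sum_le_sum fun k hk => ?_
  rw [mul_sum, ← sum_add_distrib]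
  refine sum_le_sum fun l hl => ?_
  set M := ∑ i, w i * (g k i * g l i)
  set M' := ∑ j, w' j * (g' k j * g' l j)
  have hdev : c k * c l * (M' - M) ≤ ε * (|c k| * |c l|) :=
    calc _ ≤ |c k * c l * (M' - M)| := le_abs_self _
      _ = |c k| * |c l| * |M - M'| := by rw [abs_mul, abs_mul, abs_sub_comm]
      _ ≤ |c k| * |c l| * ε := by gcongr; exact h k hk l hl
      _ = _ := mul_comm _ _
  linarith

end QuadraticForm

lemma le_empirical_residual {Ω K : Type*} [Fintype Ω] {S : Finset K} {g : K → Ω → ℝ}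
    (hg : ∀ k ∈ S, ∀ σ, |g k σ| ≤ 1) {θ : K → ℝ} {γ : ℝ}
    (hγ : ∀ σ, |∑ k ∈ S, θ k * g k σ| ≤ γ) {p : Ω → ℝ} {n : ℕ} {s : Fin n → Ω} {ε : ℝ}
    (hs : ∀ k ∈ S, ∀ l ∈ S,
      |(1 / n : ℝ) * ∑ t, g k (s t) * g l (s t) - ∑ σ, p σ * (g k σ * g l σ)| ≤ ε)
    {Δ : K → ℝ} {r : ℝ} (hr : r ≤ ∑ σ, p σ * (∑ k ∈ S, Δ k * g k σ) ^ 2) :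
    Real.exp (-γ) * (r - ε * (∑ k ∈ S, |Δ k|) ^ 2) / (2 + ∑ k ∈ S, |Δ k|) ≤
      (1 / n : ℝ) * ∑ t, Real.exp (-∑ k ∈ S, θ k * g k (s t)) *
        (Real.exp (-∑ k ∈ S, Δ k * g k (s t)) - 1 + ∑ k ∈ S, Δ k * g k (s t)) := by
  set L := ∑ k ∈ S, |Δ k|
  set y : Fin n → ℝ := fun t => ∑ k ∈ S, Δ k * g k (s t)
  have hquad : r - ε * L ^ 2 ≤ ∑ t, (1 / n : ℝ) * y t ^ 2 :=
    (sub_le_sub_right hr _).trans <| sub_le_sum_mul_sq_sum S Δ (g := fun k t => g k (s t))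
      fun k hk l hl => by simpa only [mul_sum] using hs k hk l hl
  have hterm (t : Fin n) := exp_neg_mul_sq_div_le_exp_neg_mul (hγ (s t))
    (abs_sum_mul_le_sum_abs S Δ fun k hk => hg k hk (s t))
  calc Real.exp (-γ) * (r - ε * L ^ 2) / (2 + L)
      ≤ Real.exp (-γ) * (∑ t, (1 / n : ℝ) * y t ^ 2) / (2 + L) := by gcongr
    _ = (1 / n : ℝ) * ∑ t, Real.exp (-γ) * (y t ^ 2 / (2 + L)) := by
      simp only [mul_sum, sum_div]
      exact sum_congr rfl fun t _ => by ring
    _ ≤ _ := mul_le_mul_of_nonneg_left (sum_le_sum fun t _ => hterm t) (by positivity)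

section FiniteSpace

variable {Ω : Type*} [Fintype Ω] [MeasurableSpace Ω] [MeasurableSingletonClass Ω]

lemma exists_isProbabilityMeasure_measureReal_singleton_eq {p : Ω → ℝ} (hp : ∀ σ, 0 ≤ p σ)
    (h1 : ∑ σ, p σ = 1) :
    ∃ P : Measure Ω, IsProbabilityMeasure P ∧ ∀ σ, P.real {σ} = p σ := by
  have h1' : ∑ σ, ENNReal.ofReal (p σ) = 1 := by
    rw [← ENNReal.ofReal_sum_of_nonneg fun σ _ => hp σ, h1, ENNReal.ofReal_one]
  refine ⟨(PMF.ofFintype _ h1').toMeasure, inferInstance, fun σ => ?_⟩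
  rw [measureReal_def, PMF.toMeasure_apply_singleton _ _ (measurableSet_singleton σ),
    PMF.ofFintype_apply, ENNReal.toReal_ofReal (hp σ)]

lemma measureReal_pi_eq_sum_indicator_prod {ι : Type*} [Fintype ι] [DecidableEq ι]
    (P : Measure Ω) [IsProbabilityMeasure P] (S : Set (ι → Ω)) :
    (Measure.pi fun _ => P).real S = ∑ s, S.indicator (fun s => ∏ t, P.real {s t}) s := by
  classical
  rw [← Set.coe_toFinset S, ← sum_measureReal_singleton, sum_indicator_subset _ (subset_univ _)]
  simp [measureReal_def, Measure.pi_singleton, ENNReal.toReal_prod]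

end FiniteSpace

section EmpiricalMean

variable {Ω : Type*} [MeasurableSpace Ω] {P : Measure Ω} [IsProbabilityMeasure P]

lemma measureReal_le_sum_sub_integral_le {Z : Ω → ℝ} (hZm : Measurable Z)
    (hZ : ∀ σ, |Z σ| ≤ 1) (n : ℕ) {ε : ℝ} (hε : 0 ≤ ε) :
    (Measure.pi fun _ : Fin n => P).real {s | ε ≤ ∑ t, (Z (s t) - P[Z])} ≤
      Real.exp (-ε ^ 2 / (2 * n)) := by
  have hsub (t : Fin n) : HasSubgaussianMGF (fun s : Fin n → Ω => Z (s t) - P[Z]) 1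
      (Measure.pi fun _ => P) := by
    have h : HasSubgaussianMGF (fun σ => Z σ - P[Z]) 1
        ((Measure.pi fun _ => P).map (Function.eval t)) := by
      rw [(measurePreserving_eval (fun _ => P) t).map_eq]
      convert hasSubgaussianMGF_of_mem_Icc (μ := P) (a := -1) (b := 1) hZm.aemeasurable
        (ae_of_all _ fun σ => abs_le.1 (hZ σ)) using 1
      norm_num
    exact h.of_map (measurePreserving_eval (fun _ => P) t).measurable.aemeasurable
  simpa using HasSubgaussianMGF.measure_sum_ge_le_of_iIndepFun
    (iIndepFun_pi fun _ => (hZm.sub_const P[Z]).aemeasurable) (s := univ) (fun t _ => hsub t) hε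

lemma measureReal_lt_abs_empiricalMean_sub_integral_le {Z : Ω → ℝ} (hZm : Measurable Z)
    (hZ : ∀ σ, |Z σ| ≤ 1) (n : ℕ) {ε : ℝ} (hε : 0 ≤ ε) :
    (Measure.pi fun _ : Fin n => P).real {s | ε < |(1 / n : ℝ) * ∑ t, Z (s t) - P[Z]|} ≤
      2 * Real.exp (-n * ε ^ 2 / 2) := by
  rcases n.eq_zero_or_pos with rfl | hn
  · simpa using (measureReal_le_one (μ := Measure.pi fun _ : Fin 0 => P)).trans one_le_two
  have hn' : (0 : ℝ) < n := Nat.cast_pos.2 hn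
  have hsplit : {s : Fin n → Ω | ε < |(1 / n : ℝ) * ∑ t, Z (s t) - P[Z]|} ⊆
      {s | n * ε ≤ ∑ t, (Z (s t) - P[Z])} ∪ {s | n * ε ≤ ∑ t, (-Z (s t) - P[fun σ => -Z σ])} := by
    intro s hs
    have hmean : (1 / n : ℝ) * ∑ t, Z (s t) - P[Z] = (∑ t, (Z (s t) - P[Z])) / n := by
      rw [sum_sub_distrib, sum_const, card_univ, Fintype.card_fin, nsmul_eq_mul]
      field_simp
    have hneg : ∑ t, (-Z (s t) - P[fun σ => -Z σ]) = -∑ t, (Z (s t) - P[Z]) := by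
      rw [integral_neg, ← sum_neg_distrib]
      exact sum_congr rfl fun t _ => by ring
    simp only [Set.mem_ofPred_eq, hmean, abs_div, Nat.abs_cast, lt_div_iff₀ hn'] at hs
    rw [Set.mem_union, Set.mem_ofPred_eq, Set.mem_ofPred_eq, hneg]
    rcases lt_abs.1 hs with h | h
    · exact Or.inl (by linarith)
    · exact Or.inr (by linarith)
  have hexp : Real.exp (-(n * ε) ^ 2 / (2 * n)) = Real.exp (-n * ε ^ 2 / 2) := by
    congr 1
    field_simp
  calc _ ≤ _ := measureReal_mono hsplit
    _ ≤ _ := measureReal_union_le _ _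
    _ ≤ Real.exp (-n * ε ^ 2 / 2) + Real.exp (-n * ε ^ 2 / 2) := by
      rw [← hexp]
      gcongr
      · exact measureReal_le_sum_sub_integral_le hZm hZ n (by positivity)
      · exact measureReal_le_sum_sub_integral_le hZm.neg (fun σ => by simpa using hZ σ) n
          (by positivity)
    _ = _ := by ring

lemma measureReal_biUnion_secondMoment_deviation_le {K : Type*} {S : Finset K} {g : K → Ω → ℝ}
    (hgm : ∀ k, Measurable (g k)) (hg : ∀ k ∈ S, ∀ σ, |g k σ| ≤ 1) (n : ℕ) {ε : ℝ}
    (hε : 0 ≤ ε) :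
    (Measure.pi fun _ : Fin n => P).real (⋃ k ∈ S, ⋃ l ∈ S,
        {s | ε < |(1 / n : ℝ) * ∑ t, g k (s t) * g l (s t) - P[fun σ => g k σ * g l σ]|}) ≤
      (#S : ℝ) ^ 2 * (2 * Real.exp (-n * ε ^ 2 / 2)) := by
  refine (measureReal_biUnion_finset_le _ _).trans <|
    (sum_le_sum fun k _ => measureReal_biUnion_finset_le _ _).trans ?_
  calc _ ≤ ∑ k ∈ S, ∑ l ∈ S, 2 * Real.exp (-n * ε ^ 2 / 2) := by
        refine sum_le_sum fun k hk => sum_le_sum fun l hl => ?_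
        have hgg (σ : Ω) : |g k σ * g l σ| ≤ 1 := by
          rw [abs_mul]
          exact mul_le_one₀ (hg k hk σ) (abs_nonneg _) (hg l hl σ)
        exact measureReal_lt_abs_empiricalMean_sub_integral_le ((hgm k).mul (hgm l)) hgg n hε
    _ = _ := by simp [sq]; ring

end EmpiricalMean

lemma sq_mul_two_mul_exp_le {m n ε δ : ℝ} (hε : 0 < ε) (hδ : 0 < δ)
    (hn : n > 2 / ε ^ 2 * Real.log (2 * m ^ 2 / δ)) :
    m ^ 2 * (2 * Real.exp (-n * ε ^ 2 / 2)) ≤ δ := by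
  rcases eq_or_ne m 0 with rfl | hm
  · simpa using hδ.le
  have hlog : Real.log (2 * m ^ 2 / δ) < n * ε ^ 2 / 2 := by
    rw [gt_iff_lt, div_mul_eq_mul_div, div_lt_iff₀ (by positivity)] at hn
    linarith
  have hexp := (Real.log_lt_iff_lt_exp (by positivity)).1 hlog
  rw [div_lt_iff₀ hδ] at hexp
  rw [neg_mul, neg_div, Real.exp_neg, ← mul_assoc, mul_comm (m ^ 2), ← div_eq_mul_inv,
    div_le_iff₀ (Real.exp_pos _)]
  linarith

theorem restricted_strong_convexity_general
    {V : Type*} [Fintype V] [DecidableEq V]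
    (A : V → Type*) [∀ i, Fintype (A i)] [∀ i, Nonempty (A i)]
    {K : Type*} [Fintype K]
    (nbr : K → Finset V) (f : K → (∀ i, A i) → ℝ)
    (θ : K → ℝ) (γ : ℝ)
    (hγ : ∀ (i : V) (σ : ∀ j, A j), |∑ k ∈ Kat nbr i, θ k * locg A f i k σ| ≤ γ)
    (μ : (∀ i, A i) → ℝ)
    (hμ : ∀ σ, μ σ =
      Real.exp (∑ k, θ k * f k σ) / ∑ τ : ∀ i, A i, Real.exp (∑ k, θ k * f k τ))
    (u : V)
    (hg : ∀ k ∈ Kat nbr u, ∀ σ : ∀ i, A i, |locg A f u k σ| ≤ 1)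
    (Xu : Set (K → ℝ)) (Tu : Finset K)
    (N : Seminorm ℝ ({k : K // k ∈ Tu} → ℝ)) (ρu : ℝ)
    (hLLC : ∀ x ∈ Xu,
      ∑ σ : ∀ i, A i, μ σ * (∑ k ∈ Kat nbr u, x k * locg A f u k σ) ^ 2 ≥
        ρu * N (restr Tu x) ^ 2)
    (ε₂ δ₂ : ℝ) (hε : 0 < ε₂) (hδ : 0 < δ₂)
    (n : ℕ)
    (hn : (n : ℝ) > 2 / ε₂ ^ 2 * Real.log (2 * ((Kat nbr u).card : ℝ) ^ 2 / δ₂)) :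
    ∑ s : Fin n → ∀ i, A i,
      Set.indicator
        {s : Fin n → ∀ i, A i | ∀ Δ ∈ Xu,
          (1 / n : ℝ) * ∑ t : Fin n,
              Real.exp (-∑ k ∈ Kat nbr u, θ k * locg A f u k (s t)) *
                (Real.exp (-∑ k ∈ Kat nbr u, Δ k * locg A f u k (s t)) - 1 +
                  ∑ k ∈ Kat nbr u, Δ k * locg A f u k (s t)) ≥
            Real.exp (-γ) *
              (ρu * N (restr Tu Δ) ^ 2 - ε₂ * (∑ k ∈ Kat nbr u, |Δ k|) ^ 2) /
              (2 + ∑ k ∈ Kat nbr u, |Δ k|)}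
        (fun s => ∏ t : Fin n, μ (s t)) s ≥ 1 - δ₂ := by
  set S := Kat nbr u
  set g := locg A f u
  let _ : MeasurableSpace (∀ i, A i) := ⊤
  have hZ : 0 < ∑ τ : ∀ i, A i, Real.exp (∑ k, θ k * f k τ) :=
    sum_pos (fun τ _ => Real.exp_pos _) univ_nonempty
  have hμ_sum : ∑ σ, μ σ = 1 := by simp_rw [hμ]; rw [← sum_div, div_self hZ.ne']
  obtain ⟨P, _, hPμ⟩ :=
    exists_isProbabilityMeasure_measureReal_singleton_eq (fun σ => by rw [hμ]; positivity) hμ_sum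
  have hmoment (h : (∀ i, A i) → ℝ) : P[h] = ∑ σ, μ σ * h σ := by
    simp [integral_fintype .of_finite, hPμ]
  simp_rw [← hPμ]
  rw [← measureReal_pi_eq_sum_indicator_prod, ge_iff_le]
  set bad := ⋃ k ∈ S, ⋃ l ∈ S, {s : Fin n → ∀ i, A i |
    ε₂ < |(1 / n : ℝ) * ∑ t, g k (s t) * g l (s t) - P[fun σ => g k σ * g l σ]|}
  have hbad : (Measure.pi fun _ : Fin n => P).real bad ≤ δ₂ :=
    (measureReal_biUnion_secondMoment_deviation_le (fun _ => .of_discrete) hg n hε.le).trans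
      (sq_mul_two_mul_exp_le hε hδ hn)
  calc 1 - δ₂ ≤ 1 - (Measure.pi fun _ : Fin n => P).real bad := by linarith
    _ = (Measure.pi fun _ : Fin n => P).real badᶜ := (probReal_compl_eq_one_sub .of_discrete).symm
    _ ≤ _ := by
      refine measureReal_mono fun s hs Δ hΔ => ?_
      simp only [bad, Set.mem_compl_iff, Set.mem_iUnion, not_exists, Set.mem_ofPred_eq, not_lt,
        hmoment] at hs
      exact le_empirical_residual hg (hγ u) hs (hLLC Δ hΔ)

/-- Proposition 2 (restricted strong convexity for GRISE): under the local learnability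
condition with constant `ρ_u > 0` (for a seminorm `N` on the target coordinates `T_u`),
if `n > (2/ε₂²) log(2𝐊_u²/δ₂)`, then with probability at least `1 − δ₂` under `μ^⊗n`,
for all `Δ` in the perturbation set `X_u`:
`δS_n(Δ, θ*) ≥ exp(−γ)(ρ_u N(Δ_{T_u})² − ε₂‖Δ‖₁²)/(2 + ‖Δ‖₁)`. -/
theorem restricted_strong_convexity
    {V : Type*} [Fintype V] [DecidableEq V]
    (A : V → Type*) [∀ i, Fintype (A i)] [∀ i, Nonempty (A i)]
    {K : Type*} [Fintype K]
    (nbr : K → Finset V) (f : K → (∀ i, A i) → ℝ)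
    (hloc : ∀ k (σ τ : ∀ i, A i), (∀ i ∈ nbr k, σ i = τ i) → f k σ = f k τ)
    (θ : K → ℝ) (γ : ℝ)
    (hγ : ∀ (i : V) (σ : ∀ j, A j), |∑ k ∈ Kat nbr i, θ k * locg A f i k σ| ≤ γ)
    (μ : (∀ i, A i) → ℝ)
    (hμ : ∀ σ, μ σ =
      Real.exp (∑ k, θ k * f k σ) / ∑ τ : ∀ i, A i, Real.exp (∑ k, θ k * f k τ))
    (u : V)
    (hg : ∀ k ∈ Kat nbr u, ∀ σ : ∀ i, A i, |locg A f u k σ| ≤ 1)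
    (Xu : Set (K → ℝ)) (Tu : Finset K) (hTu : Tu ⊆ Kat nbr u)
    (N : Seminorm ℝ ({k : K // k ∈ Tu} → ℝ)) (ρu : ℝ) (hρ : 0 < ρu)
    (hLLC : ∀ x ∈ Xu,
      ∑ σ : ∀ i, A i, μ σ * (∑ k ∈ Kat nbr u, x k * locg A f u k σ) ^ 2 ≥
        ρu * N (restr Tu x) ^ 2)
    (ε₂ δ₂ : ℝ) (hε : 0 < ε₂) (hδ : 0 < δ₂) (hδ' : δ₂ < 1)
    (n : ℕ)
    (hn : (n : ℝ) > 2 / ε₂ ^ 2 * Real.log (2 * ((Kat nbr u).card : ℝ) ^ 2 / δ₂)) :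
    ∑ s : Fin n → ∀ i, A i,
      Set.indicator
        {s : Fin n → ∀ i, A i | ∀ Δ ∈ Xu,
          (1 / n : ℝ) * ∑ t : Fin n,
              Real.exp (-∑ k ∈ Kat nbr u, θ k * locg A f u k (s t)) *
                (Real.exp (-∑ k ∈ Kat nbr u, Δ k * locg A f u k (s t)) - 1 +
                  ∑ k ∈ Kat nbr u, Δ k * locg A f u k (s t)) ≥
            Real.exp (-γ) *
              (ρu * N (restr Tu Δ) ^ 2 - ε₂ * (∑ k ∈ Kat nbr u, |Δ k|) ^ 2) /
              (2 + ∑ k ∈ Kat nbr u, |Δ k|)}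
        (fun s => ∏ t : Fin n, μ (s t)) s ≥ 1 - δ₂ :=
  restricted_strong_convexity_general A nbr f θ γ hγ μ hμ u hg Xu Tu N ρu hLLC ε₂ δ₂ hε hδ n hn
end

section
/- (LLC in ℓ₂-norm for pairwise models.) Let i ∈ V, assume |∂k| ≤ 2 for all k ∈ K (pairwise family), max_σ |g_{ik}(σ)| ≤ 1 for all k ∈ K_i, |A_j| ≤ q for all j ∈ V, and let γ be the maximum interaction strength. Let K* = {k ∈ K : θ*_k ≠ 0} and suppose {S_1,…,S_χ} is a partition of V into χ classes such that for every k ∈ K* and all distinct vertices u, v ∈ ∂k, u and v lie in different classes (a vertex χ-coloring of the model factor graph). Let T_i = {k ∈ MaxFac : i ∈ ∂k}. Let X_i ⊆ ℝ^{K_i}, and suppose there is ρ > 0 such that for every maximal clique c ∈ MaxCli with i ∈ c and every x ∈ X_i: Σ_{a∈A_i} μ_i(a) · Σ_{τ} (Σ_{k∈span(c)} x_k h_k(σ(a,τ)))² ≥ ρ · Σ_{k∈span(c)} x_k², where μ_i is the marginal law of the i-th coordinate under μ, τ ranges over all assignments of the coordinates in c∖{i}, and σ(a,τ) is any configuration whose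 i-th coordinate is a and whose coordinates on c∖{i} are given by τ. Then for every x ∈ X_i: E_μ[(Σ_{k∈K_i} x_k g_{ik}(σ))²] ≥ (ρ/χ) · (exp(−2γ)/q) · Σ_{k∈T_i} x_k². -/
open Finset

/-- `assignOn r τ σ` is the configuration `σ[r:=τ]` that agrees with `τ` on the
coordinates in the finite set `r` and with `σ` elsewhere. -/
def assignOn {V : Type*} [DecidableEq V] {A : V → Type*} (r : Finset V)
    (τ : ∀ j : {x // x ∈ r}, A j.1) (σ : ∀ j, A j) : ∀ j, A j :=
  fun j => if h : j ∈ r then τ ⟨j, h⟩ else σ j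

/-- The globally centered basis function of factor `k`, defined by inclusion–exclusion:
`h_k(σ) = f_k(σ) + Σ_{∅ ≠ r ⊆ ∂k} ((−1)^{|r|}/Π_{j∈r}|A_j|) Σ_{τ∈Π_{j∈r}A_j} f_k(σ[r:=τ])`. -/
noncomputable def globh {V : Type*} [Fintype V] [DecidableEq V] (A : V → Type*)
    [∀ i, Fintype (A i)] {K : Type*} (nbr : K → Finset V) (f : K → (∀ i, A i) → ℝ)
    (k : K) (σ : ∀ j, A j) : ℝ :=
  f k σ + ∑ r ∈ (nbr k).powerset.erase ∅,
    ((-1 : ℝ) ^ r.card / ∏ j ∈ r, (Fintype.card (A j) : ℝ)) *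
      ∑ τ : ∀ j : {x // x ∈ r}, A j.1, f k (assignOn r τ σ)

/-- The set of maximal factors: factors whose neighborhood is not strictly contained in
the neighborhood of another factor. -/
def MaxFac {V K : Type*} [Fintype K] [DecidableEq V] (nbr : K → Finset V) : Finset K :=
  Finset.univ.filter (fun k => ¬ ∃ k', nbr k ⊂ nbr k')

/-- The set of maximal cliques: neighborhoods of maximal factors. -/
def MaxCli {V K : Type*} [Fintype K] [DecidableEq V] (nbr : K → Finset V) :
    Finset (Finset V) :=
  (MaxFac nbr).image nbr

/-- The span of a clique `c`: the maximal factors whose neighborhood equals `c`. -/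
def cspan {V K : Type*} [Fintype K] [DecidableEq V] (nbr : K → Finset V) (c : Finset V) :
    Finset K :=
  (MaxFac nbr).filter (fun k => nbr k = c)

section Infra

variable {V : Type*} [Fintype V] [DecidableEq V]
  {A : V → Type*} [∀ i, Fintype (A i)] [∀ i, Nonempty (A i)] [∀ i, DecidableEq (A i)]
  {K : Type*} [Fintype K]

set_option linter.unusedSectionVars false

lemma assignOn_mem (r : Finset V) (τ : ∀ j : {x // x ∈ r}, A j.1) (σ : ∀ j, A j)
    {j : V} (h : j ∈ r) : assignOn r τ σ j = τ ⟨j, h⟩ := dif_pos h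

lemma assignOn_not_mem (r : Finset V) (τ : ∀ j : {x // x ∈ r}, A j.1) (σ : ∀ j, A j)
    {j : V} (h : j ∉ r) : assignOn r τ σ j = σ j := dif_neg h

lemma sum_assign_singleton (j : V) (σ : ∀ v, A v) (G : (∀ v, A v) → ℝ) :
    (∑ τ : ∀ v : {x // x ∈ ({j} : Finset V)}, A v.1, G (assignOn {j} τ σ)) =
      ∑ b : A j, G (Function.update σ j b) := by
  letI : Unique {x // x ∈ ({j} : Finset V)} :=
    ⟨⟨⟨j, Finset.mem_singleton_self j⟩⟩, fun v => Subtype.ext (Finset.mem_singleton.mp v.2)⟩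
  apply Fintype.sum_equiv (Equiv.piUnique (fun v : {x // x ∈ ({j} : Finset V)} => A v.1))
  intro τ
  congr 1
  funext v
  by_cases h : v = j
  · subst h
    rw [assignOn_mem _ _ _ (Finset.mem_singleton_self v), Function.update_self]
    rfl
  · rw [assignOn_not_mem _ _ _ (by simpa using h), Function.update_of_ne h]

lemma sum_assign_of_singleton (S : Finset V) (j : V) (hS : S = {j}) (σ : ∀ v, A v)
    (G : (∀ v, A v) → ℝ) :
    (∑ τ : ∀ v : {x // x ∈ S}, A v.1, G (assignOn S τ σ)) =
      ∑ b : A j, G (Function.update σ j b) := by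
  subst hS
  exact sum_assign_singleton j σ G

def peelEquiv (i : V) (s : Finset V) (his : i ∉ s) :
    (∀ v : {x // x ∈ insert i s}, A v.1) ≃ (A i × ∀ v : {x // x ∈ s}, A v.1) where
  toFun τ := (τ ⟨i, Finset.mem_insert_self i s⟩, fun v => τ ⟨v.1, Finset.mem_insert_of_mem v.2⟩)
  invFun p := fun v =>
    if h : v.1 ∈ s then p.2 ⟨v.1, h⟩
    else (((Finset.mem_insert.mp v.2).resolve_right h).symm ▸ p.1 : A v.1)
  left_inv := by
    intro τ
    funext v
    rcases v with ⟨u, hu⟩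
    by_cases h : u ∈ s
    · simp only [dif_pos h]
    · have e : u = i := (Finset.mem_insert.mp hu).resolve_right h
      subst e
      simp only [dif_neg h]
  right_inv := by
    intro p
    refine Prod.ext ?_ ?_
    · simp only [dif_neg his]
    · funext v
      simp only [dif_pos v.2]
  
lemma sum_assign_insert (i : V) (s : Finset V) (his : i ∉ s) (σ : ∀ v, A v)
    (G : (∀ v, A v) → ℝ) :
    (∑ τ : ∀ v : {x // x ∈ insert i s}, A v.1, G (assignOn (insert i s) τ σ)) =
      ∑ a : A i, ∑ τ : ∀ v : {x // x ∈ s}, A v.1, G (assignOn s τ (Function.update σ i a)) := by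
  have key := Fintype.sum_equiv (peelEquiv (A := A) i s his)
    (fun τ => G (assignOn (insert i s) τ σ))
    (fun p => G (assignOn s p.2 (Function.update σ i p.1))) ?_
  · rw [key, Fintype.sum_prod_type]
  intro τ
  refine congrArg G (funext fun v => ?_)
  by_cases hv : v ∈ s
  · exact (assignOn_mem _ _ _ (Finset.mem_insert_of_mem hv)).trans
      (assignOn_mem s ((peelEquiv i s his) τ).2
        (Function.update σ i ((peelEquiv i s his) τ).1) hv).symm
  · by_cases hvi : v = i
    · subst hvi
      exact (assignOn_mem _ _ _ (Finset.mem_insert_self v s)).trans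
        ((assignOn_not_mem s ((peelEquiv v s his) τ).2 _ hv).trans
          (Function.update_self _ _ _)).symm
    · exact (assignOn_not_mem _ _ _ (by simp [hvi, hv])).trans
        ((assignOn_not_mem s ((peelEquiv i s his) τ).2 _ hv).trans
          (Function.update_of_ne hvi _ _)).symm

lemma sum_assign_of_empty (S : Finset V) (hS : ∀ v, v ∉ S) (σ : ∀ v, A v)
    (G : (∀ v, A v) → ℝ) :
    (∑ τ : ∀ v : {x // x ∈ S}, A v.1, G (assignOn S τ σ)) = G σ := by
  haveI : IsEmpty {x // x ∈ S} := ⟨fun v => (hS v.1 v.2)⟩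
  haveI : Unique (∀ v : {x // x ∈ S}, A v.1) :=
    ⟨⟨fun v => isEmptyElim v⟩, fun τ => funext fun v => isEmptyElim v⟩
  rw [Fintype.sum_unique]
  have : assignOn S default σ = σ :=
    funext fun v => assignOn_not_mem _ _ _ (hS v)
  rw [this]

lemma sum_sum_assign (S : Finset V) (G : (∀ v, A v) → ℝ) :
    (∑ σ : ∀ v, A v, ∑ τ : ∀ v : {x // x ∈ S}, A v.1, G (assignOn S τ σ)) =
      (∏ v : {x // x ∈ S}, (Fintype.card (A v.1) : ℝ)) * ∑ σ : ∀ v, A v, G σ := by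
  classical
  let e : ((∀ v : {x // x ∈ S}, A v.1) × (∀ v, A v)) ≃
      ((∀ v, A v) × (∀ v : {x // x ∈ S}, A v.1)) :=
    { toFun := fun p => (assignOn S p.1 p.2, fun v => p.2 v.1)
      invFun := fun p => (fun v => p.1 v.1, assignOn S p.2 p.1)
      left_inv := by
        intro p
        refine Prod.ext ?_ ?_
        · funext v
          exact assignOn_mem _ _ _ v.2
        · funext u
          by_cases h : u ∈ S
          · exact assignOn_mem _ _ _ h
          · exact (assignOn_not_mem _ _ _ h).trans (assignOn_not_mem _ _ _ h)
      right_inv := by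
        intro p
        refine Prod.ext ?_ ?_
        · funext u
          by_cases h : u ∈ S
          · exact assignOn_mem _ _ _ h
          · exact (assignOn_not_mem _ _ _ h).trans (assignOn_not_mem _ _ _ h)
        · funext v
          exact assignOn_mem _ _ _ v.2 }
  have h1 : (∑ σ : ∀ v, A v, ∑ τ : ∀ v : {x // x ∈ S}, A v.1, G (assignOn S τ σ)) =
      ∑ p : (∀ v : {x // x ∈ S}, A v.1) × (∀ v, A v), G (assignOn S p.1 p.2) := by
    rw [Fintype.sum_prod_type]
    exact Finset.sum_comm
  rw [h1, Fintype.sum_equiv e (fun p => G (assignOn S p.1 p.2)) (fun p => G p.1) (fun p => rfl)]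
  rw [Fintype.sum_prod_type]
  simp only [Finset.sum_const, Finset.card_univ, nsmul_eq_mul, Fintype.card_pi]
  rw [Finset.mul_sum]
  push_cast
  rfl

lemma sum_weight_comp (i : V) (w : (∀ v, A v) → ℝ) (G : A i → ℝ) :
    (∑ σ : ∀ v, A v, w σ * G (σ i)) =
      ∑ a : A i, (∑ σ : ∀ v, A v, if σ i = a then w σ else 0) * G a := by
  have : ∀ a : A i, (∑ σ : ∀ v, A v, if σ i = a then w σ else 0) * G a =
      ∑ σ : ∀ v, A v, if σ i = a then w σ * G a else 0 := by
    intro a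
    rw [Finset.sum_mul]
    exact Finset.sum_congr rfl fun σ _ => by rw [ite_mul, zero_mul]
  simp only [this]
  rw [Finset.sum_comm]
  refine Finset.sum_congr rfl fun σ _ => ?_
  have : ∀ a : A i, (if σ i = a then w σ * G a else 0) = (if σ i = a then w σ * G (σ i) else 0) := by
    intro a; split <;> simp_all
  simp only [this]
  rw [Finset.sum_ite_eq]
  simp

variable {nbr : K → Finset V} {f : K → (∀ i, A i) → ℝ}

section Local

variable (hloc : ∀ k (σ τ : ∀ i, A i), (∀ i ∈ nbr k, σ i = τ i) → f k σ = f k τ)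
include hloc

lemma locg_local {i : V} {k : K} (hik : i ∈ nbr k) {σ σ' : ∀ v, A v}
    (h : ∀ v ∈ nbr k, σ v = σ' v) : locg A f i k σ = locg A f i k σ' := by
  unfold locg
  rw [hloc k σ σ' h]
  congr 2
  refine Finset.sum_congr rfl fun a _ => ?_
  refine hloc k _ _ fun v hv => ?_
  by_cases hvi : v = i
  · subst hvi; rw [Function.update_self, Function.update_self]
  · rw [Function.update_of_ne hvi, Function.update_of_ne hvi]; exact h v hv

lemma globh_local {k : K} {σ σ' : ∀ v, A v}
    (h : ∀ v ∈ nbr k, σ v = σ' v) : globh A nbr f k σ = globh A nbr f k σ' := by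
  unfold globh
  rw [hloc k σ σ' h]
  congr 1
  refine Finset.sum_congr rfl fun r hr => ?_
  have hrsub : r ⊆ nbr k := Finset.mem_powerset.mp (Finset.mem_of_mem_erase hr)
  congr 1
  refine Finset.sum_congr rfl fun τ _ => ?_
  refine hloc k _ _ fun v hv => ?_
  by_cases hvr : v ∈ r
  · rw [assignOn_mem _ _ _ hvr, assignOn_mem _ _ _ hvr]
  · rw [assignOn_not_mem _ _ _ hvr, assignOn_not_mem _ _ _ hvr]; exact h v hv

end Local

lemma subset_pair_cases {i j : V} (r : Finset V) (h : r ⊆ {i, j}) :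
    r = ∅ ∨ r = {i} ∨ r = {j} ∨ r = ({i, j} : Finset V) := by
  by_cases hi : i ∈ r <;> by_cases hj : j ∈ r
  · refine Or.inr (Or.inr (Or.inr (Finset.Subset.antisymm h ?_)))
    rw [Finset.insert_subset_iff, Finset.singleton_subset_iff]
    exact ⟨hi, hj⟩
  · refine Or.inr (Or.inl (Finset.Subset.antisymm ?_ (Finset.singleton_subset_iff.mpr hi)))
    intro x hx
    rcases Finset.mem_insert.mp (h hx) with h1 | h1
    · simpa using h1
    · exact absurd (Finset.mem_singleton.mp h1 ▸ hx) hj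
  · refine Or.inr (Or.inr (Or.inl (Finset.Subset.antisymm ?_ (Finset.singleton_subset_iff.mpr hj))))
    intro x hx
    rcases Finset.mem_insert.mp (h hx) with h1 | h1
    · exact absurd (h1 ▸ hx) hi
    · simpa using h1
  · refine Or.inl (Finset.eq_empty_of_forall_notMem fun x hx => ?_)
    rcases Finset.mem_insert.mp (h hx) with h1 | h1
    · exact hi (h1 ▸ hx)
    · exact hj (Finset.mem_singleton.mp h1 ▸ hx)

lemma powerset_pair_erase {i j : V} (hij : i ≠ j) :
    (({i, j} : Finset V).powerset).erase ∅ = {{i}, {j}, ({i, j} : Finset V)} := by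
  ext r
  simp only [Finset.mem_erase, Finset.mem_powerset, Finset.mem_insert, Finset.mem_singleton]
  constructor
  · rintro ⟨hne, hsub⟩
    rcases subset_pair_cases r hsub with h | h | h | h
    · exact absurd h hne
    · exact Or.inl h
    · exact Or.inr (Or.inl h)
    · exact Or.inr (Or.inr h)
  · rintro (rfl | rfl | rfl)
    · exact ⟨Finset.singleton_ne_empty i, by intro x hx; simp at hx; simp [hx]⟩
    · exact ⟨Finset.singleton_ne_empty j, by intro x hx; simp at hx; simp [hx]⟩
    · exact ⟨by simp, le_refl _⟩

lemma globh_pair_eq {i j : V} (hij : i ≠ j) {k : K} (hk : nbr k = {i, j}) (σ : ∀ v, A v) :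
    globh A nbr f k σ =
      f k σ - (1 / (Fintype.card (A i) : ℝ)) * ∑ a : A i, f k (Function.update σ i a)
        - (1 / (Fintype.card (A j) : ℝ)) * ∑ b : A j, f k (Function.update σ j b)
        + (1 / ((Fintype.card (A i) : ℝ) * (Fintype.card (A j) : ℝ))) *
            ∑ a : A i, ∑ b : A j, f k (Function.update (Function.update σ i a) j b) := by
  unfold globh
  rw [hk, powerset_pair_erase hij]
  have e1 : ({i} : Finset V) ≠ {j} := fun h => hij (Finset.singleton_inj.mp h)
  have e2 : ({i} : Finset V) ≠ ({i, j} : Finset V) := by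
    intro h
    have : j ∈ ({i} : Finset V) := by rw [h]; simp
    exact hij (Finset.mem_singleton.mp this).symm
  have e3 : ({j} : Finset V) ≠ ({i, j} : Finset V) := by
    intro h
    have : i ∈ ({j} : Finset V) := by rw [h]; simp
    exact hij (Finset.mem_singleton.mp this)
  rw [Finset.sum_insert (by simp [e1, e2]), Finset.sum_insert (by simp [e3]),
    Finset.sum_singleton]
  rw [sum_assign_singleton i σ (f k), sum_assign_singleton j σ (f k),
    sum_assign_insert i {j} (by simp [hij]) σ (f k)]
  simp only [sum_assign_singleton]
  rw [Finset.card_singleton, Finset.card_singleton, Finset.card_pair hij,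
    Finset.prod_singleton, Finset.prod_singleton, Finset.prod_pair hij]
  ring

lemma globh_pair_center {i j : V} (hij : i ≠ j) {k : K} (hk : nbr k = {i, j}) (σ : ∀ v, A v) :
    ∑ b : A j, globh A nbr f k (Function.update σ j b) = 0 := by
  have hci : (0 : ℝ) < (Fintype.card (A i) : ℝ) := by
    exact_mod_cast Fintype.card_pos
  have hcj : (0 : ℝ) < (Fintype.card (A j) : ℝ) := by
    exact_mod_cast Fintype.card_pos
  have hupd1 : ∀ (b b' : A j), Function.update (Function.update σ j b) j b' =
      Function.update σ j b' := fun b b' => Function.update_idem _ _ _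
  have hupd2 : ∀ (b : A j) (a : A i) (b' : A j),
      Function.update (Function.update (Function.update σ j b) i a) j b' =
        Function.update (Function.update σ i a) j b' := by
    intro b a b'
    rw [Function.update_comm (Ne.symm hij), Function.update_idem]
  simp only [globh_pair_eq hij hk, hupd1, hupd2]
  have hswap : (∑ b : A j, ∑ a : A i, f k (Function.update (Function.update σ j b) i a)) =
      ∑ a : A i, ∑ b : A j, f k (Function.update (Function.update σ i a) j b) := by
    rw [Finset.sum_comm]
    refine Finset.sum_congr rfl fun a _ => Finset.sum_congr rfl fun b _ => ?_
    rw [Function.update_comm (Ne.symm hij)]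
  rw [Finset.sum_add_distrib, Finset.sum_sub_distrib, Finset.sum_sub_distrib]
  simp only [← Finset.mul_sum]
  simp only [Finset.sum_const, Finset.card_univ, nsmul_eq_mul]
  rw [hswap]
  have hci' : (Fintype.card (A i) : ℝ) ≠ 0 := ne_of_gt hci
  have hcj' : (Fintype.card (A j) : ℝ) ≠ 0 := ne_of_gt hcj
  field_simp
  ring

lemma locg_sub_globh_pair
    (hloc : ∀ k (σ τ : ∀ i, A i), (∀ i ∈ nbr k, σ i = τ i) → f k σ = f k τ)
    {i j : V} (hij : i ≠ j) {k : K} (hk : nbr k = {i, j}) {σ σ' : ∀ v, A v}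
    (hii : σ i = σ' i) :
    locg A f i k σ - globh A nbr f k σ = locg A f i k σ' - globh A nbr f k σ' := by
  have h2 : ∀ b : A j, f k (Function.update σ j b) = f k (Function.update σ' j b) := by
    intro b
    refine hloc k _ _ fun v hv => ?_
    rw [hk] at hv
    rcases Finset.mem_insert.mp hv with rfl | hv
    · rw [Function.update_of_ne hij, Function.update_of_ne hij]; exact hii
    · rw [Finset.mem_singleton.mp hv, Function.update_self, Function.update_self]
  have h3 : ∀ (a : A i) (b : A j), f k (Function.update (Function.update σ i a) j b) =
      f k (Function.update (Function.update σ' i a) j b) := by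
    intro a b
    refine hloc k _ _ fun v hv => ?_
    rw [hk] at hv
    rcases Finset.mem_insert.mp hv with rfl | hv
    · rw [Function.update_of_ne hij, Function.update_of_ne hij,
        Function.update_self, Function.update_self]
    · rw [Finset.mem_singleton.mp hv, Function.update_self, Function.update_self]
  rw [globh_pair_eq hij hk, globh_pair_eq hij hk]
  unfold locg
  simp only [h2, h3]
  ring

lemma globh_singleton_eq {j : V} {k : K} (hk : nbr k = {j}) (σ : ∀ v, A v) :
    globh A nbr f k σ = locg A f j k σ := by
  unfold globh locg
  rw [hk]
  have hps : (({j} : Finset V).powerset).erase ∅ = {({j} : Finset V)} := by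
    ext r
    simp only [Finset.mem_erase, Finset.mem_powerset, Finset.subset_singleton_iff,
      Finset.mem_singleton]
    constructor
    · rintro ⟨h1, (rfl | rfl)⟩
      · exact absurd rfl h1
      · rfl
    · rintro rfl
      exact ⟨Finset.singleton_ne_empty j, Or.inr rfl⟩
  rw [hps, Finset.sum_singleton, sum_assign_singleton j σ (f k)]
  rw [Finset.card_singleton, Finset.prod_singleton, pow_one]
  ring

end Infra

section Core

variable {ι : Type*} [Fintype ι] [DecidableEq ι] {B : ι → Type*} [∀ v, Fintype (B v)]
  [∀ v, Nonempty (B v)]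

set_option linter.unusedSectionVars false

lemma prod_extract (p : ∀ v, B v → ℝ) (j : ι) (g : B j → ℝ) (τ : ∀ v, B v) :
    (∏ v, Function.update p j (fun b => p j b * g b) v (τ v)) =
      (∏ v, p v (τ v)) * g (τ j) := by
  rw [← Finset.mul_prod_erase Finset.univ
      (fun v => Function.update p j (fun b => p j b * g b) v (τ v)) (Finset.mem_univ j),
    ← Finset.mul_prod_erase Finset.univ (fun v => p v (τ v)) (Finset.mem_univ j)]
  have h1 : ∀ v ∈ Finset.univ.erase j,
      Function.update p j (fun b => p j b * g b) v (τ v) = p v (τ v) := by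
    intro v hv
    rw [Function.update_of_ne (Finset.mem_erase.mp hv).1]
  rw [Finset.prod_congr rfl h1, Function.update_self]
  ring

lemma sum_prod_pi (g : ∀ v, B v → ℝ) :
    (∑ τ : ∀ v, B v, ∏ v, g v (τ v)) = ∏ v, ∑ b : B v, g v b := by
  rw [Finset.prod_univ_sum, Fintype.piFinset_univ]

lemma sum_prod_single (p : ∀ v, B v → ℝ) (j : ι) (g : B j → ℝ) :
    (∑ τ : ∀ v, B v, (∏ v, p v (τ v)) * g (τ j)) =
      (∑ b : B j, p j b * g b) * ∏ v ∈ Finset.univ.erase j, ∑ b : B v, p v b := by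
  simp only [← prod_extract]
  rw [sum_prod_pi]
  rw [← Finset.mul_prod_erase Finset.univ
      (fun v => ∑ b : B v, Function.update p j (fun b => p j b * g b) v b) (Finset.mem_univ j)]
  have h1 : ∀ v ∈ Finset.univ.erase j,
      (∑ b : B v, Function.update p j (fun b => p j b * g b) v b) = ∑ b : B v, p v b := by
    intro v hv
    rw [Function.update_of_ne (Finset.mem_erase.mp hv).1]
  rw [Finset.prod_congr rfl h1, Function.update_self]

lemma sum_prod_single' (p : ∀ v, B v → ℝ) (hnorm : ∀ v, (∑ b : B v, p v b) = 1)
    (j : ι) (g : B j → ℝ) :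
    (∑ τ : ∀ v, B v, (∏ v, p v (τ v)) * g (τ j)) = ∑ b : B j, p j b * g b := by
  rw [sum_prod_single, Finset.prod_congr rfl (fun v _ => hnorm v), Finset.prod_const_one,
    mul_one]

lemma sum_prod_double (p : ∀ v, B v → ℝ) (hnorm : ∀ v, (∑ b : B v, p v b) = 1)
    {j u : ι} (hju : j ≠ u) (g : B j → ℝ) (h : B u → ℝ) :
    (∑ τ : ∀ v, B v, (∏ v, p v (τ v)) * (g (τ j) * h (τ u))) =
      (∑ b : B j, p j b * g b) * (∑ b : B u, p u b * h b) := by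
  have key : ∀ τ : ∀ v, B v, (∏ v, p v (τ v)) * (g (τ j) * h (τ u)) =
      (∏ v, Function.update p u (fun b => p u b * h b) v (τ v)) * g (τ j) := by
    intro τ
    rw [prod_extract]
    ring
  simp only [key]
  rw [sum_prod_single]
  rw [Function.update_of_ne hju]
  have h2 : (∏ v ∈ Finset.univ.erase j,
      ∑ b : B v, Function.update p u (fun b => p u b * h b) v b) = ∑ b : B u, p u b * h b := by
    rw [Finset.prod_eq_single u (fun v _ hvu => by rw [Function.update_of_ne hvu, hnorm v])
      (fun hu => absurd (Finset.mem_erase.mpr ⟨hju.symm, Finset.mem_univ u⟩) hu),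
      Function.update_self]
  rw [h2]

lemma ncore (p : ∀ v, B v → ℝ) (hnorm : ∀ v, (∑ b : B v, p v b) = 1) (ε : ℝ) (hε : 0 ≤ ε)
    (hp : ∀ v b, ε ≤ p v b) (Z : ∀ v, B v → ℝ) (hZ : ∀ v, (∑ b : B v, Z v b) = 0) (R : ℝ) :
    (∑ τ : ∀ v, B v, (∏ v, p v (τ v)) * (R + ∑ v, Z v (τ v)) ^ 2) ≥
      ε * ∑ v, ∑ b : B v, (Z v b) ^ 2 := by
  set m : ι → ℝ := fun v => ∑ b : B v, p v b * Z v b with hm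
  set D : ι → ℝ := fun v => ∑ b : B v, p v b * (Z v b) ^ 2 with hD
  have E0 : (∑ τ : ∀ v, B v, ∏ v, p v (τ v)) = 1 := by
    rw [sum_prod_pi, Finset.prod_congr rfl (fun v _ => hnorm v), Finset.prod_const_one]
  have Es : (∑ τ : ∀ v, B v, (∏ v, p v (τ v)) * (∑ v, Z v (τ v))) = ∑ v, m v := by
    have : ∀ τ : ∀ v, B v, (∏ v, p v (τ v)) * (∑ v, Z v (τ v)) =
        ∑ v, (∏ u, p u (τ u)) * Z v (τ v) := fun τ => Finset.mul_sum _ _ _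
    simp only [this]
    rw [Finset.sum_comm]
    exact Finset.sum_congr rfl fun v _ => sum_prod_single' p hnorm v (Z v)
  have Ess : (∑ τ : ∀ v, B v, (∏ v, p v (τ v)) * (∑ v, Z v (τ v)) ^ 2) =
      ∑ v, ∑ u, (if v = u then D v else m v * m u) := by
    have h1 : ∀ τ : ∀ v, B v, (∏ v, p v (τ v)) * (∑ v, Z v (τ v)) ^ 2 =
        ∑ v, ∑ u, (∏ w, p w (τ w)) * (Z v (τ v) * Z u (τ u)) := by
      intro τ
      rw [sq, Finset.sum_mul_sum]
      rw [Finset.mul_sum]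
      exact Finset.sum_congr rfl fun v _ => Finset.mul_sum _ _ _
    simp only [h1]
    rw [Finset.sum_comm]
    refine Finset.sum_congr rfl fun v _ => ?_
    rw [Finset.sum_comm]
    refine Finset.sum_congr rfl fun u _ => ?_
    by_cases hvu : v = u
    · subst hvu
      simp only [if_pos rfl]
      have : ∀ τ : ∀ w, B w, (∏ w, p w (τ w)) * (Z v (τ v) * Z v (τ v)) =
          (∏ w, p w (τ w)) * ((fun b => Z v b * Z v b) (τ v)) := fun τ => rfl
      simp only [this]
      rw [sum_prod_single' p hnorm v (fun b => Z v b * Z v b), hD]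
      simp only [sq]
      exact Finset.sum_congr rfl fun b _ => by ring
    · simp only [if_neg hvu]
      exact sum_prod_double p hnorm hvu (Z v) (Z u)
  have expand : (∑ τ : ∀ v, B v, (∏ v, p v (τ v)) * (R + ∑ v, Z v (τ v)) ^ 2) =
      R ^ 2 + 2 * R * (∑ v, m v) + ∑ v, ∑ u, (if v = u then D v else m v * m u) := by
    have h1 : ∀ τ : ∀ v, B v, (∏ v, p v (τ v)) * (R + ∑ v, Z v (τ v)) ^ 2 =
        R ^ 2 * (∏ v, p v (τ v)) + 2 * R * ((∏ v, p v (τ v)) * (∑ v, Z v (τ v))) +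
          (∏ v, p v (τ v)) * (∑ v, Z v (τ v)) ^ 2 := fun τ => by ring
    simp only [h1]
    rw [Finset.sum_add_distrib, Finset.sum_add_distrib, ← Finset.mul_sum, ← Finset.mul_sum,
      E0, Es, Ess]
    ring
  have split : (∑ v, ∑ u, (if v = u then D v else m v * m u)) =
      (∑ v, (D v - m v * m v)) + (∑ v, m v) * (∑ v, m v) := by
    rw [Finset.sum_mul_sum, ← Finset.sum_add_distrib]
    refine Finset.sum_congr rfl fun v _ => ?_
    have h1 : ∀ u, (if v = u then D v else m v * m u) =
        m v * m u + (if v = u then D v - m v * m u else 0) := by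
      intro u
      by_cases h : v = u
      · subst h; simp
      · simp [h]
    simp only [h1]
    rw [Finset.sum_add_distrib, Finset.sum_ite_eq]
    simp only [Finset.mem_univ, if_pos]
    ring
  have perv : ∀ v, D v - m v * m v ≥ ε * ∑ b : B v, (Z v b) ^ 2 := by
    intro v
    have h1 : D v - m v * m v = ∑ b : B v, p v b * (Z v b - m v) ^ 2 := by
      have h2 : ∀ b : B v, p v b * (Z v b - m v) ^ 2 =
          p v b * (Z v b) ^ 2 - 2 * m v * (p v b * Z v b) + (m v * m v) * p v b := by
        intro b; ring
      simp only [h2]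
      rw [Finset.sum_add_distrib, Finset.sum_sub_distrib, ← Finset.mul_sum, ← Finset.mul_sum,
        hnorm v]
      have e1 : (∑ b : B v, p v b * Z v b) = m v := rfl
      have e2 : (∑ b : B v, p v b * Z v b ^ 2) = D v := rfl
      rw [e1, e2]
      ring
    have h3 : (∑ b : B v, p v b * (Z v b - m v) ^ 2) ≥ ε * ∑ b : B v, (Z v b - m v) ^ 2 := by
      rw [Finset.mul_sum]
      refine Finset.sum_le_sum fun b _ => ?_
      exact mul_le_mul_of_nonneg_right (hp v b) (sq_nonneg _)
    have h4 : (∑ b : B v, (Z v b - m v) ^ 2) ≥ ∑ b : B v, (Z v b) ^ 2 := by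
      have h5 : ∀ b : B v, (Z v b - m v) ^ 2 =
          (Z v b) ^ 2 - 2 * m v * Z v b + m v ^ 2 := fun b => by ring
      simp only [h5]
      rw [Finset.sum_add_distrib, Finset.sum_sub_distrib, ← Finset.mul_sum, hZ v]
      have : (0:ℝ) ≤ ∑ _b : B v, m v ^ 2 := Finset.sum_nonneg fun b _ => sq_nonneg _
      linarith
    calc D v - m v * m v = ∑ b : B v, p v b * (Z v b - m v) ^ 2 := h1
      _ ≥ ε * ∑ b : B v, (Z v b - m v) ^ 2 := h3
      _ ≥ ε * ∑ b : B v, (Z v b) ^ 2 := mul_le_mul_of_nonneg_left h4 hε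
  rw [expand, split]
  have hfin : (∑ v, (D v - m v * m v)) ≥ ε * ∑ v, ∑ b : B v, (Z v b) ^ 2 := by
    rw [Finset.mul_sum]
    exact Finset.sum_le_sum fun v _ => perv v
  nlinarith [sq_nonneg (R + ∑ v, m v), hfin]

lemma core (w : ∀ v, B v → ℝ) (hw : ∀ v b, 0 < w v b) (ε : ℝ) (hε : 0 ≤ ε)
    (hεw : ∀ v b, ε * (∑ b' : B v, w v b') ≤ w v b)
    (Z : ∀ v, B v → ℝ) (hZ : ∀ v, (∑ b : B v, Z v b) = 0) (R : ℝ) :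
    (∑ τ : ∀ v, B v, (∏ v, w v (τ v)) * (R + ∑ v, Z v (τ v)) ^ 2) ≥
      ε * (∑ τ : ∀ v, B v, ∏ v, w v (τ v)) * ∑ v, ∑ b : B v, (Z v b) ^ 2 := by
  have hW : ∀ v, (0:ℝ) < ∑ b : B v, w v b :=
    fun v => Finset.sum_pos (fun b _ => hw v b) Finset.univ_nonempty
  set p : ∀ v, B v → ℝ := fun v b => w v b / (∑ b' : B v, w v b') with hp
  have hnorm : ∀ v, (∑ b : B v, p v b) = 1 := by
    intro v
    rw [hp, ← Finset.sum_div, div_self (ne_of_gt (hW v))]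
  have hpε : ∀ v b, ε ≤ p v b := by
    intro v b
    rw [hp, le_div_iff₀ (hW v)]
    exact hεw v b
  have hww : ∀ τ : ∀ v, B v, (∏ v, w v (τ v)) =
      (∏ v, ∑ b : B v, w v b) * ∏ v, p v (τ v) := by
    intro τ
    rw [← Finset.prod_mul_distrib]
    refine Finset.prod_congr rfl fun v _ => ?_
    rw [hp, mul_div_cancel₀ _ (ne_of_gt (hW v))]
  have hWtot : (∑ τ : ∀ v, B v, ∏ v, w v (τ v)) = ∏ v, ∑ b : B v, w v b := sum_prod_pi w
  rw [hWtot]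
  simp only [hww]
  have h1 : (∑ τ : ∀ v, B v, (∏ v, ∑ b : B v, w v b) * (∏ v, p v (τ v)) *
      (R + ∑ v, Z v (τ v)) ^ 2) = (∏ v, ∑ b : B v, w v b) *
        ∑ τ : ∀ v, B v, (∏ v, p v (τ v)) * (R + ∑ v, Z v (τ v)) ^ 2 := by
    rw [Finset.mul_sum]
    exact Finset.sum_congr rfl fun τ _ => by ring
  rw [h1, mul_assoc]
  have hWpos : (0:ℝ) < ∏ v, ∑ b : B v, w v b := Finset.prod_pos fun v _ => hW v
  have h3 : ε * ((∏ v, ∑ b : B v, w v b) * ∑ v, ∑ b : B v, (Z v b) ^ 2) =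
      (∏ v, ∑ b : B v, w v b) * (ε * ∑ v, ∑ b : B v, (Z v b) ^ 2) := by ring
  rw [h3]
  exact mul_le_mul_of_nonneg_left (ncore p hnorm ε hε hpε Z hZ R) (le_of_lt hWpos)

end Core

section Split

variable {V : Type*} [Fintype V] [DecidableEq V]
  {A : V → Type*} [∀ i, Fintype (A i)] [∀ i, Nonempty (A i)] [∀ i, DecidableEq (A i)]
  {K : Type*} [Fintype K] {nbr : K → Finset V} {f : K → (∀ i, A i) → ℝ}

set_option linter.unusedSectionVars false

lemma phi_flip
    (hloc : ∀ k (σ τ : ∀ i, A i), (∀ i ∈ nbr k, σ i = τ i) → f k σ = f k τ)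
    (θ : K → ℝ) (γ : ℝ)
    (hγ : ∀ (j : V) (σ : ∀ l, A l), |∑ k ∈ Kat nbr j, θ k * locg A f j k σ| ≤ γ)
    (v : V) (σ : ∀ u, A u) (b b' : A v) :
    (∑ k ∈ Kat nbr v, θ k * f k (Function.update σ v b')) - 2 * γ ≤
      ∑ k ∈ Kat nbr v, θ k * f k (Function.update σ v b) := by
  have key : (∑ k ∈ Kat nbr v, θ k * f k (Function.update σ v b)) -
      (∑ k ∈ Kat nbr v, θ k * f k (Function.update σ v b')) =
      (∑ k ∈ Kat nbr v, θ k * locg A f v k (Function.update σ v b)) -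
      (∑ k ∈ Kat nbr v, θ k * locg A f v k (Function.update σ v b')) := by
    rw [← Finset.sum_sub_distrib, ← Finset.sum_sub_distrib]
    refine Finset.sum_congr rfl fun k _ => ?_
    unfold locg
    simp only [Function.update_idem]
    ring
  have h1 := abs_le.mp (hγ v (Function.update σ v b))
  have h2 := abs_le.mp (hγ v (Function.update σ v b'))
  linarith [key, h1.1, h1.2, h2.1, h2.2]

lemma H_split (θ : K → ℝ)
    (hloc : ∀ k (σ τ : ∀ i, A i), (∀ i ∈ nbr k, σ i = τ i) → f k σ = f k τ)
    (S : Finset V)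
    (hS2 : ∀ k, θ k ≠ 0 → ∀ u ∈ nbr k, ∀ v ∈ nbr k, u ∈ S → v ∈ S → u = v)
    (σ : ∀ u, A u) (τ : ∀ v : {x // x ∈ S}, A v.1) :
    (∑ k, θ k * f k (assignOn S τ σ)) =
      (∑ k ∈ Finset.univ.filter (fun k => ∀ v ∈ S, v ∉ nbr k), θ k * f k σ) +
        ∑ v : {x // x ∈ S}, ∑ k ∈ Kat nbr v.1, θ k * f k (Function.update σ v.1 (τ v)) := by
  have perk : ∀ k, θ k * f k (assignOn S τ σ) =
      (if ∀ v ∈ S, v ∉ nbr k then θ k * f k σ else 0) +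
        ∑ v : {x // x ∈ S}, (if v.1 ∈ nbr k then θ k * f k (Function.update σ v.1 (τ v))
          else 0) := by
    intro k
    by_cases hθ : θ k = 0
    · simp [hθ]
    by_cases hempty : ∀ v ∈ S, v ∉ nbr k
    · rw [if_pos hempty]
      have hz : ∀ v : {x // x ∈ S}, (if v.1 ∈ nbr k then
          θ k * f k (Function.update σ v.1 (τ v)) else 0) = 0 := by
        intro v
        rw [if_neg (hempty v.1 v.2)]
      rw [Finset.sum_congr rfl fun v _ => hz v, Finset.sum_const_zero, add_zero]
      congr 1
      refine hloc k _ _ fun u hu => ?_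
      exact assignOn_not_mem _ _ _ fun huS => hempty u huS hu
    · rw [if_neg hempty]
      push_neg at hempty
      obtain ⟨v₀, hv₀S, hv₀nbr⟩ := hempty
      set v₀' : {x // x ∈ S} := ⟨v₀, hv₀S⟩ with hv₀'
      have huniq : ∀ v : {x // x ∈ S}, v.1 ∈ nbr k → v = v₀' :=
        fun v hv => Subtype.ext (hS2 k hθ _ hv _ hv₀nbr v.2 hv₀S)
      rw [Finset.sum_eq_single v₀'
        (fun v _ hvne => if_neg (fun hv => hvne (huniq v hv)))
        (fun h => absurd (Finset.mem_univ v₀') h)]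
      rw [if_pos hv₀nbr, zero_add]
      congr 1
      refine hloc k _ _ fun u hu => ?_
      by_cases huS : u ∈ S
      · have : (⟨u, huS⟩ : {x // x ∈ S}) = v₀' := huniq ⟨u, huS⟩ hu
        have hu0 : u = v₀ := congrArg Subtype.val this
        rw [assignOn_mem _ _ _ huS]
        subst hu0
        rw [Function.update_self]
      · have hne : u ≠ v₀ := fun h => huS (h ▸ hv₀S)
        rw [assignOn_not_mem _ _ _ huS, Function.update_of_ne hne]
  rw [Finset.sum_congr rfl fun k _ => perk k, Finset.sum_add_distrib]
  congr 1
  · rw [Finset.sum_filter]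
  · rw [Finset.sum_comm]
    refine Finset.sum_congr rfl fun v _ => ?_
    rw [Kat, Finset.sum_filter]

lemma F_split
    (hloc : ∀ k (σ τ : ∀ i, A i), (∀ i ∈ nbr k, σ i = τ i) → f k σ = f k τ)
    (hpair : ∀ k : K, (nbr k).card ≤ 2)
    (i : V) (x : K → ℝ) (σ₀ : ∀ u, A u) (S : Finset V) (hiS : i ∉ S) (σ : ∀ u, A u) :
    ∃ R : ℝ, ∀ τ : ∀ v : {x // x ∈ S}, A v.1,
      (∑ k ∈ Kat nbr i, x k * locg A f i k (assignOn S τ σ)) =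
        R + ∑ v : {x // x ∈ S},
          ∑ k ∈ Finset.univ.filter (fun k => nbr k = ({i, v.1} : Finset V)),
            x k * globh A nbr f k
              (Function.update (Function.update σ₀ v.1 (τ v)) i (σ i)) := by
  classical
  set mk : K → ℝ := fun k => locg A f i k (Function.update σ₀ i (σ i)) -
    globh A nbr f k (Function.update σ₀ i (σ i)) with hmk
  refine ⟨(∑ k ∈ Kat nbr i, if ∀ v ∈ S, v ∉ nbr k then x k * locg A f i k σ else 0) +
    ∑ v : {x // x ∈ S}, ∑ k ∈ Finset.univ.filter (fun k => nbr k = ({i, v.1} : Finset V)),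
      x k * mk k, fun τ => ?_⟩
  have perk : ∀ k ∈ Kat nbr i, x k * locg A f i k (assignOn S τ σ) =
      (if ∀ v ∈ S, v ∉ nbr k then x k * locg A f i k σ else 0) +
        ∑ v : {x // x ∈ S}, (if nbr k = ({i, v.1} : Finset V) then
          x k * globh A nbr f k (Function.update (Function.update σ₀ v.1 (τ v)) i (σ i)) +
            x k * mk k else 0) := by
    intro k hk
    have hik : i ∈ nbr k := by
      simpa [Kat] using hk
    by_cases hempty : ∀ v ∈ S, v ∉ nbr k
    · rw [if_pos hempty]
      have hz : ∀ v : {x // x ∈ S}, (if nbr k = ({i, v.1} : Finset V) then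
          x k * globh A nbr f k (Function.update (Function.update σ₀ v.1 (τ v)) i (σ i)) +
            x k * mk k else 0) = 0 := by
        intro v
        refine if_neg fun h => hempty v.1 v.2 ?_
        rw [h]
        exact Finset.mem_insert_of_mem (Finset.mem_singleton_self _)
      rw [Finset.sum_congr rfl fun v _ => hz v, Finset.sum_const_zero, add_zero]
      congr 1
      refine locg_local hloc hik fun u hu => ?_
      exact assignOn_not_mem _ _ _ fun huS => hempty u huS hu
    · rw [if_neg hempty, zero_add]
      push_neg at hempty
      obtain ⟨v₀, hv₀S, hv₀nbr⟩ := hempty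
      have hij : i ≠ v₀ := fun h => hiS (h ▸ hv₀S)
      have hk2 : nbr k = ({i, v₀} : Finset V) := by
        refine (Finset.eq_of_subset_of_card_le ?_ ?_).symm
        · rw [Finset.insert_subset_iff, Finset.singleton_subset_iff]
          exact ⟨hik, hv₀nbr⟩
        · rw [Finset.card_pair hij]
          exact hpair k
      set v₀' : {x // x ∈ S} := ⟨v₀, hv₀S⟩ with hv₀'
      have huniq : ∀ v : {x // x ∈ S}, nbr k = ({i, v.1} : Finset V) → v = v₀' := by
        intro v hv
        have h1 : v.1 ∈ nbr k := by
          rw [hv]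
          exact Finset.mem_insert_of_mem (Finset.mem_singleton_self _)
        rw [hk2] at h1
        rcases Finset.mem_insert.mp h1 with h1 | h1
        · exact absurd (h1 ▸ v.2) hiS
        · exact Subtype.ext (Finset.mem_singleton.mp h1)
      rw [Finset.sum_eq_single v₀'
        (fun v _ hvne => if_neg (fun hv => hvne (huniq v hv)))
        (fun h => absurd (Finset.mem_univ v₀') h)]
      rw [if_pos hk2]
      have e1 : locg A f i k (assignOn S τ σ) - globh A nbr f k (assignOn S τ σ) = mk k := by
        rw [hmk]
        refine locg_sub_globh_pair hloc hij hk2 ?_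
        exact (assignOn_not_mem _ _ _ hiS).trans (Function.update_self _ _ _).symm
      have e2 : globh A nbr f k (assignOn S τ σ) = globh A nbr f k
          (Function.update (Function.update σ₀ v₀'.1 (τ v₀')) i (σ i)) := by
        refine globh_local hloc fun u hu => ?_
        rw [hk2] at hu
        rcases Finset.mem_insert.mp hu with rfl | hu
        · rw [assignOn_not_mem _ _ _ hiS, Function.update_self]
        · have hu0 : u = v₀ := Finset.mem_singleton.mp hu
          subst hu0
          rw [assignOn_mem _ _ _ hv₀S, Function.update_of_ne (fun h => hij h.symm),
            Function.update_self]
      linear_combination x k * e1 + x k * e2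
  have step1 : (∑ k ∈ Kat nbr i, x k * locg A f i k (assignOn S τ σ)) =
      (∑ k ∈ Kat nbr i, if ∀ v ∈ S, v ∉ nbr k then x k * locg A f i k σ else 0) +
        ∑ v : {x // x ∈ S}, ∑ k ∈ Kat nbr i, (if nbr k = ({i, v.1} : Finset V) then
          x k * globh A nbr f k (Function.update (Function.update σ₀ v.1 (τ v)) i (σ i)) +
            x k * mk k else 0) := by
    rw [Finset.sum_congr rfl perk, Finset.sum_add_distrib]
    congr 1
    exact Finset.sum_comm
  rw [step1]
  have hv : ∀ v : {x // x ∈ S},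
      (∑ k ∈ Kat nbr i, (if nbr k = ({i, v.1} : Finset V) then
        x k * globh A nbr f k (Function.update (Function.update σ₀ v.1 (τ v)) i (σ i)) +
          x k * mk k else 0)) =
      (∑ k ∈ Finset.univ.filter (fun k => nbr k = ({i, v.1} : Finset V)),
        x k * globh A nbr f k (Function.update (Function.update σ₀ v.1 (τ v)) i (σ i))) +
      ∑ k ∈ Finset.univ.filter (fun k => nbr k = ({i, v.1} : Finset V)), x k * mk k := by
    intro v
    rw [← Finset.sum_add_distrib]
    rw [Finset.sum_filter, Kat, Finset.sum_filter]
    refine Finset.sum_congr rfl fun k _ => ?_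
    by_cases h : nbr k = ({i, v.1} : Finset V)
    · have h2 : i ∈ nbr k := by
        rw [h]
        exact Finset.mem_insert_self _ _
      simp [h, h2]
    · simp [h]
  rw [Finset.sum_congr rfl fun v _ => hv v, Finset.sum_add_distrib]
  ring

lemma key_color
    (hloc : ∀ k (σ τ : ∀ i, A i), (∀ i ∈ nbr k, σ i = τ i) → f k σ = f k τ)
    (hpair : ∀ k : K, (nbr k).card ≤ 2)
    (θ : K → ℝ) (γ : ℝ)
    (hγ : ∀ (j : V) (σ : ∀ l, A l), |∑ k ∈ Kat nbr j, θ k * locg A f j k σ| ≤ γ)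
    (μ : (∀ j, A j) → ℝ)
    (hμ : ∀ σ, μ σ =
      Real.exp (∑ k, θ k * f k σ) / ∑ τ : ∀ j, A j, Real.exp (∑ k, θ k * f k τ))
    (i : V) (x : K → ℝ)
    (q : ℕ) (hq : ∀ j, Fintype.card (A j) ≤ q)
    (S : Finset V) (hiS : i ∉ S)
    (hS2 : ∀ k, θ k ≠ 0 → ∀ u ∈ nbr k, ∀ v ∈ nbr k, u ∈ S → v ∈ S → u = v) :
    (Real.exp (-(2 * γ)) / (q : ℝ)) *
      ∑ j ∈ S, ∑ a : A i, (∑ σ : ∀ v, A v, if σ i = a then μ σ else 0) *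
        ∑ b : A j, (∑ k ∈ Finset.univ.filter (fun k => nbr k = ({i, j} : Finset V)),
          x k * globh A nbr f k (Function.update (Function.update
            (fun u => Classical.arbitrary (A u)) j b) i a)) ^ 2 ≤
    ∑ σ : ∀ v, A v, μ σ * (∑ k ∈ Kat nbr i, x k * locg A f i k σ) ^ 2 := by
  classical
  set σ₀ : ∀ v, A v := fun u => Classical.arbitrary (A u) with hσ₀
  set ε : ℝ := Real.exp (-(2 * γ)) / (q : ℝ) with hεdef
  set Z0 : ℝ := ∑ τ : ∀ j, A j, Real.exp (∑ k, θ k * f k τ) with hZ0def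
  have hZ0 : (0:ℝ) < Z0 :=
    Finset.sum_pos (fun τ _ => Real.exp_pos _) Finset.univ_nonempty
  have hγ0 : 0 ≤ γ := le_trans (abs_nonneg _) (hγ i σ₀)
  have hq0 : 0 < q := lt_of_lt_of_le Fintype.card_pos (hq i)
  have hqR : (0:ℝ) < (q:ℝ) := by exact_mod_cast hq0
  have hε0 : 0 < ε := div_pos (Real.exp_pos _) hqR
  -- the inner quadratic form, as a function of the value at i
  set GG : A i → ℝ := fun a => ∑ v : {y // y ∈ S}, ∑ b : A v.1,
    (∑ k ∈ Finset.univ.filter (fun k => nbr k = ({i, v.1} : Finset V)),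
      x k * globh A nbr f k (Function.update (Function.update σ₀ v.1 b) i a)) ^ 2 with hGG
  -- per-configuration bound via the product-measure core inequality
  have hper : ∀ σ : ∀ v, A v,
      ε * (∑ τ : ∀ v : {y // y ∈ S}, A v.1, μ (assignOn S τ σ)) * GG (σ i) ≤
      ∑ τ : ∀ v : {y // y ∈ S}, A v.1,
        μ (assignOn S τ σ) * (∑ k ∈ Kat nbr i, x k * locg A f i k (assignOn S τ σ)) ^ 2 := by
    intro σ
    set w : ∀ v : {y // y ∈ S}, A v.1 → ℝ := fun v b =>
      Real.exp (∑ k ∈ Kat nbr v.1, θ k * f k (Function.update σ v.1 b)) with hw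
    have hwpos : ∀ (v : {y // y ∈ S}) (b : A v.1), 0 < w v b := fun v b => Real.exp_pos _
    set C : ℝ := Real.exp (∑ k ∈ Finset.univ.filter (fun k => ∀ v ∈ S, v ∉ nbr k),
      θ k * f k σ) / Z0 with hC
    have hCpos : 0 < C := div_pos (Real.exp_pos _) hZ0
    have hμfac : ∀ τ : ∀ v : {y // y ∈ S}, A v.1,
        μ (assignOn S τ σ) = C * ∏ v : {y // y ∈ S}, w v (τ v) := by
      intro τ
      rw [hμ, H_split θ hloc S hS2 σ τ, Real.exp_add,
        Real.exp_sum Finset.univ (fun v : {y // y ∈ S} =>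
          ∑ k ∈ Kat nbr v.1, θ k * f k (Function.update σ v.1 (τ v))), hC]
      simp only [hw]
      ring
    obtain ⟨R, hR⟩ := F_split hloc hpair i x σ₀ S hiS σ
    set Zf : ∀ v : {y // y ∈ S}, A v.1 → ℝ := fun v b =>
      ∑ k ∈ Finset.univ.filter (fun k => nbr k = ({i, v.1} : Finset V)),
        x k * globh A nbr f k (Function.update (Function.update σ₀ v.1 b) i (σ i)) with hZf
    have hεw : ∀ (v : {y // y ∈ S}) (b : A v.1), ε * (∑ b' : A v.1, w v b') ≤ w v b := by
      intro v b
      have h1 : ∀ b' : A v.1, w v b' ≤ Real.exp (2 * γ) * w v b := by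
        intro b'
        simp only [hw]
        rw [← Real.exp_add]
        apply Real.exp_le_exp.mpr
        have := phi_flip hloc θ γ hγ v.1 σ b b'
        linarith
      have h2 : (∑ b' : A v.1, w v b') ≤ (q : ℝ) * (Real.exp (2 * γ) * w v b) := by
        calc (∑ b' : A v.1, w v b') ≤ ∑ _b' : A v.1, Real.exp (2 * γ) * w v b :=
              Finset.sum_le_sum fun b' _ => h1 b'
          _ = (Fintype.card (A v.1) : ℝ) * (Real.exp (2 * γ) * w v b) := by
              rw [Finset.sum_const, Finset.card_univ, nsmul_eq_mul]
          _ ≤ (q : ℝ) * (Real.exp (2 * γ) * w v b) := by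
              have hcard : (Fintype.card (A v.1) : ℝ) ≤ (q : ℝ) := by
                exact_mod_cast hq v.1
              exact mul_le_mul_of_nonneg_right hcard
                (mul_nonneg (Real.exp_pos _).le (hwpos v b).le)
      have h3 : ε * ((q : ℝ) * (Real.exp (2 * γ) * w v b)) = w v b := by
        have h4 : Real.exp (-(2 * γ)) * Real.exp (2 * γ) = 1 := by
          rw [← Real.exp_add]
          simp
        have hqne : (q : ℝ) ≠ 0 := ne_of_gt hqR
        calc ε * ((q : ℝ) * (Real.exp (2 * γ) * w v b))
            = (Real.exp (-(2 * γ)) * Real.exp (2 * γ)) * w v b * ((q : ℝ) / (q : ℝ)) := by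
              rw [hεdef]; ring
          _ = w v b := by rw [h4, div_self hqne]; ring
      calc ε * (∑ b' : A v.1, w v b') ≤ ε * ((q : ℝ) * (Real.exp (2 * γ) * w v b)) :=
            mul_le_mul_of_nonneg_left h2 hε0.le
        _ = w v b := h3
    have hZcent : ∀ v : {y // y ∈ S}, (∑ b : A v.1, Zf v b) = 0 := by
      intro v
      have hvne : v.1 ≠ i := fun h => hiS (h ▸ v.2)
      have hij : i ≠ v.1 := fun h => hvne h.symm
      simp only [hZf]
      rw [Finset.sum_comm]
      refine Finset.sum_eq_zero fun k hk => ?_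
      have hknbr : nbr k = ({i, v.1} : Finset V) := (Finset.mem_filter.mp hk).2
      have hcomm : ∀ b : A v.1, Function.update (Function.update σ₀ v.1 b) i (σ i) =
          Function.update (Function.update σ₀ i (σ i)) v.1 b := fun b =>
        Function.update_comm hvne _ _ _
      simp only [hcomm]
      rw [← Finset.mul_sum, globh_pair_center hij hknbr, mul_zero]
    have hcore := core w hwpos ε hε0.le hεw Zf hZcent R
    have hGGeq : GG (σ i) = ∑ v : {y // y ∈ S}, ∑ b : A v.1, (Zf v b) ^ 2 := by
      simp only [hGG, hZf]
    calc ε * (∑ τ : ∀ v : {y // y ∈ S}, A v.1, μ (assignOn S τ σ)) * GG (σ i)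
        = C * (ε * (∑ τ : ∀ v : {y // y ∈ S}, A v.1, ∏ v, w v (τ v)) *
            ∑ v : {y // y ∈ S}, ∑ b : A v.1, (Zf v b) ^ 2) := by
          rw [Finset.sum_congr rfl fun τ _ => hμfac τ, ← Finset.mul_sum, hGGeq]
          ring
      _ ≤ C * ∑ τ : ∀ v : {y // y ∈ S}, A v.1,
            (∏ v, w v (τ v)) * (R + ∑ v, Zf v (τ v)) ^ 2 :=
          mul_le_mul_of_nonneg_left hcore hCpos.le
      _ = ∑ τ : ∀ v : {y // y ∈ S}, A v.1,
            μ (assignOn S τ σ) * (∑ k ∈ Kat nbr i, x k * locg A f i k (assignOn S τ σ)) ^ 2 := by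
          rw [Finset.mul_sum]
          refine Finset.sum_congr rfl fun τ _ => ?_
          rw [hμfac τ, hR τ]
          ring
  -- sum the per-configuration bound over σ
  set N : ℝ := ∏ v : {y // y ∈ S}, (Fintype.card (A v.1) : ℝ) with hN
  have hNpos : 0 < N := Finset.prod_pos fun v _ => by exact_mod_cast Fintype.card_pos
  have hstep1 : (∑ σ : ∀ v, A v, ∑ τ : ∀ v : {y // y ∈ S}, A v.1,
      μ (assignOn S τ σ) * (∑ k ∈ Kat nbr i, x k * locg A f i k (assignOn S τ σ)) ^ 2) =
      N * ∑ σ : ∀ v, A v, μ σ * (∑ k ∈ Kat nbr i, x k * locg A f i k σ) ^ 2 :=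
    sum_sum_assign S (fun σ => μ σ * (∑ k ∈ Kat nbr i, x k * locg A f i k σ) ^ 2)
  have hstep3 : (∑ σ : ∀ v, A v, (∑ τ : ∀ v : {y // y ∈ S}, A v.1,
      μ (assignOn S τ σ)) * GG (σ i)) = N * ∑ σ : ∀ v, A v, μ σ * GG (σ i) := by
    have h1 : ∀ σ : ∀ v, A v, (∑ τ : ∀ v : {y // y ∈ S}, A v.1,
        μ (assignOn S τ σ)) * GG (σ i) = ∑ τ : ∀ v : {y // y ∈ S}, A v.1,
          μ (assignOn S τ σ) * GG ((assignOn S τ σ) i) := by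
      intro σ
      rw [Finset.sum_mul]
      refine Finset.sum_congr rfl fun τ _ => ?_
      rw [assignOn_not_mem _ _ _ hiS]
    rw [Finset.sum_congr rfl fun σ _ => h1 σ]
    exact sum_sum_assign S (fun σ => μ σ * GG (σ i))
  have hmain : ε * (N * ∑ σ : ∀ v, A v, μ σ * GG (σ i)) ≤
      N * ∑ σ : ∀ v, A v, μ σ * (∑ k ∈ Kat nbr i, x k * locg A f i k σ) ^ 2 := by
    rw [← hstep1, ← hstep3]
    calc ε * ∑ σ : ∀ v, A v, (∑ τ : ∀ v : {y // y ∈ S}, A v.1, μ (assignOn S τ σ)) * GG (σ i)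
        = ∑ σ : ∀ v, A v, ε * (∑ τ : ∀ v : {y // y ∈ S}, A v.1,
            μ (assignOn S τ σ)) * GG (σ i) := by
          rw [Finset.mul_sum]
          exact Finset.sum_congr rfl fun σ _ => by ring
      _ ≤ _ := Finset.sum_le_sum fun σ _ => hper σ
  have hfinal : ε * (∑ σ : ∀ v, A v, μ σ * GG (σ i)) ≤
      ∑ σ : ∀ v, A v, μ σ * (∑ k ∈ Kat nbr i, x k * locg A f i k σ) ^ 2 := by
    have := hmain
    rw [show ε * (N * ∑ σ : ∀ v, A v, μ σ * GG (σ i)) =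
      N * (ε * ∑ σ : ∀ v, A v, μ σ * GG (σ i)) from by ring] at this
    exact le_of_mul_le_mul_left this hNpos
  -- identify the σ-average of GG with the sum over S of the NPC quadratic forms
  have hid : (∑ σ : ∀ v, A v, μ σ * GG (σ i)) =
      ∑ j ∈ S, ∑ a : A i, (∑ σ : ∀ v, A v, if σ i = a then μ σ else 0) *
        ∑ b : A j, (∑ k ∈ Finset.univ.filter (fun k => nbr k = ({i, j} : Finset V)),
          x k * globh A nbr f k (Function.update (Function.update σ₀ j b) i a)) ^ 2 := by
    rw [sum_weight_comp i μ GG]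
    simp only [hGG]
    have h2 : (∑ a : A i, (∑ σ : ∀ v, A v, if σ i = a then μ σ else 0) *
        ∑ v : {y // y ∈ S}, ∑ b : A v.1,
          (∑ k ∈ Finset.univ.filter (fun k => nbr k = ({i, v.1} : Finset V)),
            x k * globh A nbr f k (Function.update (Function.update σ₀ v.1 b) i a)) ^ 2) =
        ∑ v : {y // y ∈ S}, ∑ a : A i, (∑ σ : ∀ v, A v, if σ i = a then μ σ else 0) *
          ∑ b : A v.1, (∑ k ∈ Finset.univ.filter (fun k => nbr k = ({i, v.1} : Finset V)),
            x k * globh A nbr f k (Function.update (Function.update σ₀ v.1 b) i a)) ^ 2 := by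
      rw [Finset.sum_congr rfl fun a _ => Finset.mul_sum _ _ _]
      exact Finset.sum_comm
    rw [h2]
    exact Finset.sum_coe_sort S (fun j => ∑ a : A i,
      (∑ σ : ∀ v, A v, if σ i = a then μ σ else 0) *
        ∑ b : A j, (∑ k ∈ Finset.univ.filter (fun k => nbr k = ({i, j} : Finset V)),
          x k * globh A nbr f k (Function.update (Function.update σ₀ j b) i a)) ^ 2)
  rw [← hid]
  exact hfinal

end Split

/-- Proposition 4 (LLC in ℓ₂-norm for pairwise models): for a pairwise family
(`|∂k| ≤ 2`) whose model factor graph admits a vertex `χ`-coloring, if the NPC condition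
holds with constant `ρ > 0` on the perturbation set `X_i`, then for every `x ∈ X_i`,
`E_μ[(Σ_{k∈K_i} x_k g_{ik}(σ))²] ≥ (ρ/χ)(e^{−2γ}/q) Σ_{k∈T_i} x_k²`, where
`T_i` is the set of maximal factors whose neighborhood contains `i`. -/
theorem llc_l2_pairwise_from_npc
    {V : Type*} [Fintype V] [DecidableEq V]
    (A : V → Type*) [∀ i, Fintype (A i)] [∀ i, Nonempty (A i)] [∀ i, DecidableEq (A i)]
    {K : Type*} [Fintype K]
    (nbr : K → Finset V) (f : K → (∀ i, A i) → ℝ)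
    (hloc : ∀ k (σ τ : ∀ i, A i), (∀ i ∈ nbr k, σ i = τ i) → f k σ = f k τ)
    (hpair : ∀ k : K, (nbr k).card ≤ 2)
    (θ : K → ℝ) (γ : ℝ)
    (hγ : ∀ (j : V) (σ : ∀ l, A l), |∑ k ∈ Kat nbr j, θ k * locg A f j k σ| ≤ γ)
    (μ : (∀ j, A j) → ℝ)
    (hμ : ∀ σ, μ σ =
      Real.exp (∑ k, θ k * f k σ) / ∑ τ : ∀ j, A j, Real.exp (∑ k, θ k * f k τ))
    (i : V)
    (hg : ∀ k ∈ Kat nbr i, ∀ σ : ∀ j, A j, |locg A f i k σ| ≤ 1)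
    (q : ℕ) (hq : ∀ j, Fintype.card (A j) ≤ q)
    (χ : ℕ) (col : V → Fin χ)
    (hcol : ∀ k : K, θ k ≠ 0 → ∀ u ∈ nbr k, ∀ v ∈ nbr k, u ≠ v → col u ≠ col v)
    (Xi : Set (K → ℝ)) (ρ : ℝ) (hρ : 0 < ρ)
    (hNPC : ∀ c ∈ MaxCli nbr, i ∈ c → ∀ x ∈ Xi,
      ∑ a : A i, (∑ σ : ∀ j, A j, if σ i = a then μ σ else 0) *
        ∑ τ : ∀ j : {v // v ∈ c.erase i}, A j.1,
          (∑ k ∈ cspan nbr c, x k * globh A nbr f k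
            (Function.update
              (assignOn (c.erase i) τ (fun j => Classical.arbitrary (A j))) i a)) ^ 2 ≥
        ρ * ∑ k ∈ cspan nbr c, x k ^ 2) :
    ∀ x ∈ Xi,
      ∑ σ : ∀ j, A j, μ σ * (∑ k ∈ Kat nbr i, x k * locg A f i k σ) ^ 2 ≥
        (ρ / (χ : ℝ)) * (Real.exp (-(2 * γ)) / (q : ℝ)) *
          ∑ k ∈ (MaxFac nbr).filter (fun k => i ∈ nbr k), x k ^ 2 := by
  intro x hx
  classical
  set σ₀ : ∀ v, A v := fun v => Classical.arbitrary (A v) with hσ₀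
  set F : (∀ v, A v) → ℝ := fun σ => ∑ k ∈ Kat nbr i, x k * locg A f i k σ with hF
  set Ti : Finset K := (MaxFac nbr).filter (fun k => i ∈ nbr k) with hTi
  set ε : ℝ := Real.exp (-(2 * γ)) / (q : ℝ) with hεdef
  have hZ0 : (0:ℝ) < ∑ τ : ∀ v, A v, Real.exp (∑ k, θ k * f k τ) :=
    Finset.sum_pos (fun τ _ => Real.exp_pos _) Finset.univ_nonempty
  have hμnn : ∀ σ, 0 ≤ μ σ := fun σ => by
    rw [hμ σ]; exact div_nonneg (Real.exp_pos _).le hZ0.le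
  have hγ0 : 0 ≤ γ := le_trans (abs_nonneg _) (hγ i σ₀)
  have hq0 : 0 < q := lt_of_lt_of_le Fintype.card_pos (hq i)
  have hqR : (0:ℝ) < (q:ℝ) := by exact_mod_cast hq0
  have hε0 : 0 < ε := div_pos (Real.exp_pos _) hqR
  have hε1 : ε ≤ 1 := by
    rw [hεdef, div_le_one hqR]
    calc Real.exp (-(2 * γ)) ≤ 1 := Real.exp_le_one_iff.mpr (by linarith)
      _ ≤ (q:ℝ) := by exact_mod_cast hq0
  have hχ0 : 0 < χ := Fin.pos (col i)
  have hχR : (0:ℝ) < (χ:ℝ) := by exact_mod_cast hχ0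
  have hLHSnn : 0 ≤ ∑ σ : ∀ v, A v, μ σ * F σ ^ 2 :=
    Finset.sum_nonneg fun σ _ => mul_nonneg (hμnn σ) (sq_nonneg _)
  have hTnn : 0 ≤ ∑ k ∈ Ti, x k ^ 2 := Finset.sum_nonneg fun k _ => sq_nonneg _
  by_cases hcase : ∃ k, i ∈ nbr k ∧ ∃ j, j ∈ nbr k ∧ j ≠ i
  · obtain ⟨kp, hkpi, jp, hjpnbr, hjpne⟩ := hcase
    have hmaxpair : ∀ (k : K) (j : V), j ≠ i → nbr k = ({i, j} : Finset V) →
        k ∈ MaxFac nbr := by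
      intro k j hjne hk
      rw [MaxFac, Finset.mem_filter]
      refine ⟨Finset.mem_univ _, ?_⟩
      rintro ⟨k', hss⟩
      have h1 := Finset.card_lt_card hss
      rw [hk, Finset.card_pair (fun h => hjne h.symm)] at h1
      have h2 := hpair k'
      omega
    set Qj : V → ℝ := fun j => ∑ a : A i,
      (∑ σ : ∀ v, A v, if σ i = a then μ σ else 0) *
        ∑ b : A j, (∑ k ∈ Finset.univ.filter (fun k => nbr k = ({i, j} : Finset V)),
          x k * globh A nbr f k (Function.update (Function.update σ₀ j b) i a)) ^ 2 with hQj
    have hNPCj : ∀ j : V, j ≠ i →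
        ρ * (∑ k ∈ Finset.univ.filter (fun k => nbr k = ({i, j} : Finset V)), x k ^ 2) ≤
          Qj j := by
      intro j hjne
      by_cases hSBne : (Finset.univ.filter (fun k => nbr k = ({i, j} : Finset V))).Nonempty
      · obtain ⟨k1, hk1⟩ := hSBne
        have hk1nbr : nbr k1 = ({i, j} : Finset V) := (Finset.mem_filter.mp hk1).2
        have hcli : ({i, j} : Finset V) ∈ MaxCli nbr := by
          rw [MaxCli, Finset.mem_image]
          exact ⟨k1, hmaxpair k1 j hjne hk1nbr, hk1nbr⟩
        have hspan : cspan nbr ({i, j} : Finset V) =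
            Finset.univ.filter (fun k => nbr k = ({i, j} : Finset V)) := by
          rw [cspan]
          ext k
          simp only [Finset.mem_filter, Finset.mem_univ, true_and]
          exact ⟨fun h => h.2, fun h => ⟨hmaxpair k j hjne h, h⟩⟩
        have hNPC' := hNPC {i, j} hcli (Finset.mem_insert_self i _) x hx
        have herase : (({i, j} : Finset V).erase i) = ({j} : Finset V) := by
          ext u
          simp only [Finset.mem_erase, Finset.mem_insert, Finset.mem_singleton]
          constructor
          · rintro ⟨h1, (rfl | h2)⟩
            · exact absurd rfl h1
            · exact h2
          · rintro rfl
            exact ⟨hjne, Or.inr rfl⟩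
        have hτ : ∀ a : A i, (∑ τ : ∀ v : {u // u ∈ ({i, j} : Finset V).erase i}, A v.1,
            (∑ k ∈ cspan nbr {i, j}, x k * globh A nbr f k (Function.update
              (assignOn (({i, j} : Finset V).erase i) τ
                (fun u => Classical.arbitrary (A u))) i a)) ^ 2) =
            ∑ b : A j, (∑ k ∈ cspan nbr {i, j}, x k * globh A nbr f k
              (Function.update (Function.update
                (fun u => Classical.arbitrary (A u)) j b) i a)) ^ 2 :=
          fun a => sum_assign_of_singleton (({i, j} : Finset V).erase i) j herase
            (fun u => Classical.arbitrary (A u))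
            (fun σ' => (∑ k ∈ cspan nbr {i, j},
              x k * globh A nbr f k (Function.update σ' i a)) ^ 2)
        have hQ : ρ * (∑ k ∈ cspan nbr ({i, j} : Finset V), x k ^ 2) ≤
            ∑ a : A i, (∑ σ : ∀ v, A v, if σ i = a then μ σ else 0) *
              ∑ b : A j, (∑ k ∈ cspan nbr ({i, j} : Finset V),
                x k * globh A nbr f k (Function.update (Function.update
                  (fun u => Classical.arbitrary (A u)) j b) i a)) ^ 2 :=
          le_trans hNPC' (le_of_eq (Finset.sum_congr rfl fun a _ => by rw [hτ a]))
        rw [hspan] at hQ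
        calc ρ * (∑ k ∈ Finset.univ.filter (fun k => nbr k = ({i, j} : Finset V)), x k ^ 2)
            ≤ _ := hQ
          _ = Qj j := by simp only [hQj, hσ₀]
      · have hempty : Finset.univ.filter (fun k => nbr k = ({i, j} : Finset V)) = ∅ :=
          Finset.not_nonempty_iff_eq_empty.mp hSBne
        rw [hQj]
        simp only [hempty, Finset.sum_empty]
        simp
    -- per-color bound
    have hKEY : ∀ t : Fin χ,
        ε * ∑ j ∈ Finset.univ.filter (fun v => col v = t ∧ v ≠ i), Qj j ≤
          ∑ σ : ∀ v, A v, μ σ * F σ ^ 2 := by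
      intro t
      have hiS : i ∉ Finset.univ.filter (fun v => col v = t ∧ v ≠ i) := by simp
      have hS2 : ∀ k, θ k ≠ 0 → ∀ u ∈ nbr k, ∀ v ∈ nbr k,
          u ∈ Finset.univ.filter (fun v => col v = t ∧ v ≠ i) →
          v ∈ Finset.univ.filter (fun v => col v = t ∧ v ≠ i) → u = v := by
        intro k hθ u hu v hv huS hvS
        by_contra hne
        have h1 : col u = t := (Finset.mem_filter.mp huS).2.1
        have h2 : col v = t := (Finset.mem_filter.mp hvS).2.1
        exact hcol k hθ u hu v hv hne (h1.trans h2.symm)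
      have h0 := key_color hloc hpair θ γ hγ μ hμ i x q hq _ hiS hS2
      rw [hεdef, hF]
      have hconv : (∑ j ∈ Finset.univ.filter (fun v => col v = t ∧ v ≠ i), Qj j) =
          ∑ j ∈ Finset.univ.filter (fun v => col v = t ∧ v ≠ i), ∑ a : A i,
            (∑ σ : ∀ v, A v, if σ i = a then μ σ else 0) *
              ∑ b : A j, (∑ k ∈ Finset.univ.filter (fun k => nbr k = ({i, j} : Finset V)),
                x k * globh A nbr f k (Function.update (Function.update
                  (fun u => Classical.arbitrary (A u)) j b) i a)) ^ 2 :=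
        Finset.sum_congr rfl fun j _ => by simp only [hQj, hσ₀]
      rw [hconv]
      exact h0
    -- sum over colors
    have hsumt : (∑ t : Fin χ,
        ∑ j ∈ Finset.univ.filter (fun v => col v = t ∧ v ≠ i), Qj j) =
        ∑ j ∈ Finset.univ.filter (fun v => v ≠ i), Qj j := by
      have hfe : ∀ t : Fin χ, Finset.univ.filter (fun v => col v = t ∧ v ≠ i) =
          (Finset.univ.filter (fun v => v ≠ i)).filter (fun v => col v = t) := by
        intro t
        ext u
        simp only [Finset.mem_filter, Finset.mem_univ, true_and]
        tauto
      rw [Finset.sum_congr rfl fun t _ => by rw [hfe t]]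
      exact Finset.sum_fiberwise _ col Qj
    have hχE : ε * (∑ j ∈ Finset.univ.filter (fun v => v ≠ i), Qj j) ≤
        (χ : ℝ) * ∑ σ : ∀ v, A v, μ σ * F σ ^ 2 := by
      rw [← hsumt, Finset.mul_sum]
      calc (∑ t : Fin χ, ε * ∑ j ∈ Finset.univ.filter (fun v => col v = t ∧ v ≠ i), Qj j)
          ≤ ∑ _t : Fin χ, ∑ σ : ∀ v, A v, μ σ * F σ ^ 2 :=
            Finset.sum_le_sum fun t _ => hKEY t
        _ = (χ : ℝ) * ∑ σ : ∀ v, A v, μ σ * F σ ^ 2 := by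
            rw [Finset.sum_const, Finset.card_univ, Fintype.card_fin, nsmul_eq_mul]
    have hQρ : ρ * (∑ j ∈ Finset.univ.filter (fun v => v ≠ i),
        ∑ k ∈ Finset.univ.filter (fun k => nbr k = ({i, j} : Finset V)), x k ^ 2) ≤
        ∑ j ∈ Finset.univ.filter (fun v => v ≠ i), Qj j := by
      rw [Finset.mul_sum]
      exact Finset.sum_le_sum fun j hj => hNPCj j (Finset.mem_filter.mp hj).2
    -- partition of the maximal factors at i by their partner vertex
    have hTpart : (∑ j ∈ Finset.univ.filter (fun v => v ≠ i),
        ∑ k ∈ Finset.univ.filter (fun k => nbr k = ({i, j} : Finset V)), x k ^ 2) =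
        ∑ k ∈ Ti, x k ^ 2 := by
      calc (∑ j ∈ Finset.univ.filter (fun v => v ≠ i),
          ∑ k ∈ Finset.univ.filter (fun k => nbr k = ({i, j} : Finset V)), x k ^ 2)
          = ∑ j ∈ Finset.univ.filter (fun v => v ≠ i), ∑ k : K,
              if nbr k = ({i, j} : Finset V) then x k ^ 2 else 0 :=
            Finset.sum_congr rfl fun j _ => Finset.sum_filter _ _
        _ = ∑ k : K, ∑ j ∈ Finset.univ.filter (fun v => v ≠ i),
              (if nbr k = ({i, j} : Finset V) then x k ^ 2 else 0) := Finset.sum_comm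
        _ = ∑ k ∈ Ti, x k ^ 2 := by
            rw [hTi, Finset.sum_filter, MaxFac, Finset.sum_filter]
            refine Finset.sum_congr rfl fun k _ => ?_
            by_cases hex : ∃ j, j ≠ i ∧ nbr k = ({i, j} : Finset V)
            · obtain ⟨j₀, hj₀ne, hj₀⟩ := hex
              have huniq : ∀ j, j ≠ i → nbr k = ({i, j} : Finset V) → j = j₀ := by
                intro j hne hj
                have hjmem : j ∈ ({i, j₀} : Finset V) := by
                  rw [← hj₀, hj]
                  exact Finset.mem_insert_of_mem (Finset.mem_singleton_self _)
                rcases Finset.mem_insert.mp hjmem with h | h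
                · exact absurd h hne
                · exact Finset.mem_singleton.mp h
              rw [Finset.sum_eq_single_of_mem j₀
                (Finset.mem_filter.mpr ⟨Finset.mem_univ _, hj₀ne⟩)
                (fun j hjmem hne => if_neg fun hj =>
                  hne (huniq j (Finset.mem_filter.mp hjmem).2 hj))]
              rw [if_pos hj₀]
              have hmax' : ¬∃ k', nbr k ⊂ nbr k' := by
                have := hmaxpair k j₀ hj₀ne hj₀
                rw [MaxFac, Finset.mem_filter] at this
                exact this.2
              have hik : i ∈ nbr k := by
                rw [hj₀]
                exact Finset.mem_insert_self _ _
              rw [if_pos hmax', if_pos hik]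
            · push_neg at hex
              rw [Finset.sum_eq_zero (fun j hj =>
                if_neg (hex j (Finset.mem_filter.mp hj).2))]
              by_cases hm : ¬∃ k', nbr k ⊂ nbr k'
              · rw [if_pos hm]
                by_cases hik : i ∈ nbr k
                · exfalso
                  have hsing : nbr k = ({i} : Finset V) := by
                    apply Finset.Subset.antisymm
                    · intro u hu
                      rw [Finset.mem_singleton]
                      by_contra hne
                      have hnbru : nbr k = ({i, u} : Finset V) := by
                        refine (Finset.eq_of_subset_of_card_le ?_ ?_).symm
                        · rw [Finset.insert_subset_iff, Finset.singleton_subset_iff]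
                          exact ⟨hik, hu⟩
                        · rw [Finset.card_pair (fun h => hne h.symm)]
                          exact hpair k
                      exact hex u hne hnbru
                    · exact Finset.singleton_subset_iff.mpr hik
                  apply hm
                  refine ⟨kp, ?_⟩
                  rw [hsing]
                  rw [Finset.ssubset_iff_of_subset (Finset.singleton_subset_iff.mpr hkpi)]
                  exact ⟨jp, hjpnbr, fun h => hjpne (Finset.mem_singleton.mp h)⟩
                · rw [if_neg hik]
              · rw [if_neg hm]
    have h3 : ε * (ρ * ∑ k ∈ Ti, x k ^ 2) ≤ (χ : ℝ) * ∑ σ : ∀ v, A v, μ σ * F σ ^ 2 := by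
      rw [← hTpart]
      calc ε * (ρ * ∑ j ∈ Finset.univ.filter (fun v => v ≠ i),
          ∑ k ∈ Finset.univ.filter (fun k => nbr k = ({i, j} : Finset V)), x k ^ 2)
          ≤ ε * ∑ j ∈ Finset.univ.filter (fun v => v ≠ i), Qj j :=
            mul_le_mul_of_nonneg_left hQρ hε0.le
        _ ≤ (χ : ℝ) * ∑ σ : ∀ v, A v, μ σ * F σ ^ 2 := hχE
    rw [ge_iff_le]
    calc (ρ / (χ : ℝ)) * ε * ∑ k ∈ Ti, x k ^ 2
        = (ε * (ρ * ∑ k ∈ Ti, x k ^ 2)) / (χ : ℝ) := by ring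
      _ ≤ ((χ : ℝ) * ∑ σ : ∀ v, A v, μ σ * F σ ^ 2) / (χ : ℝ) := by gcongr
      _ = ∑ σ : ∀ v, A v, μ σ * F σ ^ 2 := by field_simp
  · -- Case II : all factors at i are single-site
    push_neg at hcase
    have hsingle : ∀ k, i ∈ nbr k → nbr k = {i} := by
      intro k hik
      apply Finset.Subset.antisymm
      · intro u hu
        exact Finset.mem_singleton.mpr (hcase k hik u hu)
      · exact Finset.singleton_subset_iff.mpr hik
    by_cases hK : ∃ k₀, k₀ ∈ Kat nbr i
    · obtain ⟨k₀, hk₀⟩ := hK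
      have hk₀i : i ∈ nbr k₀ := by simpa [Kat] using hk₀
      have hmax : ∀ k, i ∈ nbr k → k ∈ MaxFac nbr := by
        intro k hik
        rw [MaxFac, Finset.mem_filter]
        refine ⟨Finset.mem_univ _, ?_⟩
        rintro ⟨k', hss⟩
        have hsub : nbr k ⊆ nbr k' := hss.subset
        have hik' : i ∈ nbr k' := hsub hik
        obtain ⟨u, hu, hune⟩ := (Finset.ssubset_iff_of_subset hsub).mp hss
        have : u ≠ i := by
          intro h
          rw [h, hsingle k hik] at hune
          exact hune (Finset.mem_singleton_self i)
        exact this (hcase k' hik' u hu)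
      have hTK : Ti = Kat nbr i := by
        rw [hTi, Kat]
        ext k
        constructor
        · intro hk
          exact Finset.mem_filter.mpr ⟨Finset.mem_univ _, (Finset.mem_filter.mp hk).2⟩
        · intro hk
          exact Finset.mem_filter.mpr ⟨hmax k (Finset.mem_filter.mp hk).2,
            (Finset.mem_filter.mp hk).2⟩
      have hspan : cspan nbr ({i} : Finset V) = Kat nbr i := by
        rw [cspan, Kat]
        ext k
        simp only [Finset.mem_filter, Finset.mem_univ, true_and]
        constructor
        · rintro ⟨h1, h2⟩
          rw [h2]
          exact Finset.mem_singleton_self i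
        · intro hik
          exact ⟨hmax k hik, hsingle k hik⟩
      have hcli : ({i} : Finset V) ∈ MaxCli nbr := by
        rw [MaxCli, Finset.mem_image]
        exact ⟨k₀, hmax k₀ hk₀i, hsingle k₀ hk₀i⟩
      have hNPC' := hNPC {i} hcli (Finset.mem_singleton_self i) x hx
      have hτ : ∀ a : A i, (∑ τ : ∀ j : {v // v ∈ ({i} : Finset V).erase i}, A j.1,
          (∑ k ∈ cspan nbr {i}, x k * globh A nbr f k
            (Function.update (assignOn (({i} : Finset V).erase i) τ
              (fun j => Classical.arbitrary (A j))) i a)) ^ 2) =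
          (∑ k ∈ cspan nbr {i}, x k * globh A nbr f k
            (Function.update (fun j => Classical.arbitrary (A j)) i a)) ^ 2 :=
        fun a => sum_assign_of_empty (({i} : Finset V).erase i)
          (fun v hv => (Finset.mem_erase.mp hv).1
            (Finset.mem_singleton.mp (Finset.mem_erase.mp hv).2))
          (fun j => Classical.arbitrary (A j))
          (fun σ' => (∑ k ∈ cspan nbr {i},
            x k * globh A nbr f k (Function.update σ' i a)) ^ 2)
      have hNPC2 : ρ * (∑ k ∈ Kat nbr i, x k ^ 2) ≤ ∑ a : A i,
          (∑ σ : ∀ v, A v, if σ i = a then μ σ else 0) *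
            (∑ k ∈ Kat nbr i, x k * globh A nbr f k (Function.update σ₀ i a)) ^ 2 := by
        simp only [hσ₀]
        rw [← hspan]
        exact le_trans hNPC' (le_of_eq (Finset.sum_congr rfl fun a _ => by rw [hτ a]))
      have hFeq : ∀ σ : ∀ v, A v, F σ =
          ∑ k ∈ Kat nbr i, x k * locg A f i k (Function.update σ₀ i (σ i)) := by
        intro σ
        rw [hF]
        refine Finset.sum_congr rfl fun k hk => ?_
        have hik : i ∈ nbr k := by simpa [Kat] using hk
        congr 1
        refine locg_local hloc hik fun u hu => ?_
        rw [hsingle k hik] at hu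
        rw [Finset.mem_singleton.mp hu, Function.update_self]
      have hE : (∑ σ : ∀ v, A v, μ σ * F σ ^ 2) = ∑ a : A i,
          (∑ σ : ∀ v, A v, if σ i = a then μ σ else 0) *
            (∑ k ∈ Kat nbr i, x k * locg A f i k (Function.update σ₀ i a)) ^ 2 := by
        rw [Finset.sum_congr rfl fun σ _ => by rw [hFeq σ]]
        exact sum_weight_comp i μ (fun a =>
          (∑ k ∈ Kat nbr i, x k * locg A f i k (Function.update σ₀ i a)) ^ 2)
      have hglo : ∀ a : A i, (∑ k ∈ Kat nbr i, x k * locg A f i k (Function.update σ₀ i a)) =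
          ∑ k ∈ Kat nbr i, x k * globh A nbr f k (Function.update σ₀ i a) := by
        intro a
        refine Finset.sum_congr rfl fun k hk => ?_
        rw [globh_singleton_eq (hsingle k (by simpa [Kat] using hk))]
      have hbig : (∑ σ : ∀ v, A v, μ σ * F σ ^ 2) ≥ ρ * ∑ k ∈ Kat nbr i, x k ^ 2 := by
        rw [hE]
        rw [Finset.sum_congr rfl fun a _ => by rw [hglo a]]
        exact hNPC2
      have hfac : (ρ / (χ:ℝ)) * ε ≤ ρ := by
        have h1 : ρ / (χ:ℝ) ≤ ρ := by
          rw [div_le_iff₀ hχR]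
          nlinarith [hρ.le, hχR, (by exact_mod_cast hχ0 : (1:ℝ) ≤ (χ:ℝ))]
        have h2 : 0 ≤ ρ / (χ:ℝ) := div_nonneg hρ.le hχR.le
        nlinarith
      rw [hTK]
      have hKnn : 0 ≤ ∑ k ∈ Kat nbr i, x k ^ 2 := Finset.sum_nonneg fun k _ => sq_nonneg _
      calc (ρ / (χ:ℝ)) * ε * ∑ k ∈ Kat nbr i, x k ^ 2
          ≤ ρ * ∑ k ∈ Kat nbr i, x k ^ 2 := mul_le_mul_of_nonneg_right hfac hKnn
        _ ≤ ∑ σ : ∀ v, A v, μ σ * F σ ^ 2 := hbig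
    · push_neg at hK
      have hTempty : Ti = ∅ := by
        rw [hTi]
        apply Finset.eq_empty_of_forall_notMem
        intro k hk
        exact hK k (Finset.mem_filter.mpr ⟨Finset.mem_univ _, (Finset.mem_filter.mp hk).2⟩)
      rw [hTempty]
      simpa using hLHSnn
end
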